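/- arXiv:2404.06023 — 6 statements merged into one kernel-verified Lean document; each statement's English description precedes it below -/
import Mathlib

section
/- Let ‖·‖_c be any norm on ℝ^d, let l_cs, u_cs > 0 satisfy l_cs‖x‖₂ ≤ ‖x‖_c ≤ u_cs‖x‖₂ for all x ∈ ℝ^d, let η > 0, and define the generalized Moreau envelope M_η(x) = inf_{u∈ℝ^d} { (1/2)‖u‖_c² + (1/(2η))‖x − u‖₂² }. Then: (1) M_η is convex and differentiable with ‖∇M_η(x) − ∇M_η(y)‖₂ ≤ (1/η)‖x − y‖₂ for all x, y; (2) there exists a norm ‖·‖_m on ℝ^d such that M_η(x) = (1/2)‖x‖_m² for all x; (3) (1 + η l_cs²)^{1/2}‖x‖_m ≤ ‖x‖_c ≤ (1 + η u_cs²)^{1/2}‖x‖_m for all x; (4) ⟨∇M_η(x), y⟩ ≤ ‖x‖_m ‖y‖_m for all x, y ∈ ℝ^d. -/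
open MeasureTheory

open RealInnerProductSpace

noncomputable section

/-- A function on `ℝ^d` satisfying the axioms of a norm. -/
structure IsNormLike {V : Type*} [AddCommGroup V] [Module ℝ V] (c : V → ℝ) : Prop where
  add_le : ∀ x y, c (x + y) ≤ c x + c y
  smul_eq : ∀ (r : ℝ) (x : V), c (r • x) = |r| * c x
  pos : ∀ x, x ≠ 0 → 0 < c x

/-- The generalized Moreau envelope of `(1/2) (c ·)²` with respect to `(1/2)‖·‖₂²`. -/
def moreau {d : ℕ} (c : EuclideanSpace ℝ (Fin d) → ℝ) (η : ℝ)
    (x : EuclideanSpace ℝ (Fin d)) : ℝ :=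
  ⨅ u : EuclideanSpace ℝ (Fin d), ((c u) ^ 2 / 2 + ‖x - u‖ ^ 2 / (2 * η))

private lemma limit_aux {A B C : ℝ} (hC : 0 ≤ C)
    (h : ∀ t : ℝ, 0 < t → t ≤ 1 → A ≤ B + t * C) : A ≤ B := by
  by_contra hAB
  push_neg at hAB
  set t := min 1 ((A - B) / (2 * (C + 1))) with ht
  have hd : 0 < (A - B) / (2 * (C + 1)) := div_pos (by linarith) (by positivity)
  have htpos : 0 < t := lt_min one_pos hd
  have ht1 : t ≤ 1 := min_le_left _ _
  have h2 : t ≤ (A - B) / (2 * (C + 1)) := min_le_right _ _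
  have h3 := h t htpos ht1
  have h4 : t * C ≤ (A - B) / (2 * (C + 1)) * C :=
    mul_le_mul_of_nonneg_right h2 hC
  have h5 : (A - B) / (2 * (C + 1)) * C < A - B := by
    rw [div_mul_eq_mul_div, div_lt_iff₀ (by positivity)]
    nlinarith
  linarith

private lemma sq_combo {a b s t : ℝ} (ha : 0 ≤ a) (hb : 0 ≤ b) (hab : a + b = 1) :
    (a * s + b * t) ^ 2 ≤ a * s ^ 2 + b * t ^ 2 := by
  nlinarith [sq_nonneg (s - t), mul_nonneg ha hb]

private lemma moreau_exists_min {d : ℕ} {c : EuclideanSpace ℝ (Fin d) → ℝ}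
    (hcont : Continuous c) (hc0 : c 0 = 0) (hcnn : ∀ u, 0 ≤ c u)
    {η : ℝ} (hη : 0 < η) (x : EuclideanSpace ℝ (Fin d)) :
    ∃ p, ∀ u, (c p) ^ 2 / 2 + ‖x - p‖ ^ 2 / (2 * η) ≤ (c u) ^ 2 / 2 + ‖x - u‖ ^ 2 / (2 * η) := by
  have hfc : Continuous fun u : EuclideanSpace ℝ (Fin d) =>
      (c u) ^ 2 / 2 + ‖x - u‖ ^ 2 / (2 * η) :=
    ((hcont.pow 2).div_const 2).add
      (((continuous_const.sub continuous_id).norm.pow 2).div_const (2 * η))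
  obtain ⟨p, hpK, hp⟩ := (isCompact_closedBall x ‖x‖).exists_isMinOn
    ⟨0, by simp [Metric.mem_closedBall, dist_eq_norm]⟩ hfc.continuousOn
  refine ⟨p, fun u => ?_⟩
  by_cases hu : u ∈ Metric.closedBall x ‖x‖
  · exact isMinOn_iff.1 hp u hu
  · have h0mem : (0 : EuclideanSpace ℝ (Fin d)) ∈ Metric.closedBall x ‖x‖ := by
      simp [Metric.mem_closedBall, dist_eq_norm]
    have h0 := isMinOn_iff.1 hp 0 h0mem
    simp only [hc0, sub_zero] at h0
    have h1 : ‖x‖ < ‖x - u‖ := by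
      rw [Metric.mem_closedBall, not_le, dist_comm, dist_eq_norm] at hu
      exact hu
    have h2 : ‖x‖ ^ 2 / (2 * η) ≤ ‖x - u‖ ^ 2 / (2 * η) := by
      apply div_le_div_of_nonneg_right ?_ (by positivity) |>.trans_eq rfl
      · exact pow_le_pow_left₀ (norm_nonneg x) h1.le 2
    have h3 : 0 ≤ (c u) ^ 2 / 2 := by positivity
    calc (c p) ^ 2 / 2 + ‖x - p‖ ^ 2 / (2 * η) ≤ 0 ^ 2 / 2 + ‖x‖ ^ 2 / (2 * η) := h0
    _ ≤ (c u) ^ 2 / 2 + ‖x - u‖ ^ 2 / (2 * η) := by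
        simp only [ne_eq, OfNat.ofNat_ne_zero, not_false_eq_true, zero_pow, zero_div]
        linarith

set_option maxHeartbeats 1600000 in
theorem stmt_0 {d : ℕ} (c : EuclideanSpace ℝ (Fin d) → ℝ) (hc : IsNormLike c)
    (lcs ucs : ℝ) (hlcs : 0 < lcs) (hucs : 0 < ucs)
    (hlow : ∀ x, lcs * ‖x‖ ≤ c x) (hupp : ∀ x, c x ≤ ucs * ‖x‖)
    (η : ℝ) (hη : 0 < η) :
    (ConvexOn ℝ Set.univ (moreau c η) ∧ Differentiable ℝ (moreau c η) ∧
      ∀ x y, ‖gradient (moreau c η) x - gradient (moreau c η) y‖ ≤ (1 / η) * ‖x - y‖) ∧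
    ∃ m : EuclideanSpace ℝ (Fin d) → ℝ, IsNormLike m ∧
      (∀ x, moreau c η x = (m x) ^ 2 / 2) ∧
      (∀ x, Real.sqrt (1 + η * lcs ^ 2) * m x ≤ c x ∧
        c x ≤ Real.sqrt (1 + η * ucs ^ 2) * m x) ∧
      (∀ x y, @inner ℝ _ _ (gradient (moreau c η) x) y ≤ m x * m y) := by
  classical
  -- basic facts about c
  have hc0 : c 0 = 0 := by
    have := hc.smul_eq 0 0
    simpa using this
  have hcneg : ∀ x, c (-x) = c x := by
    intro x
    have := hc.smul_eq (-1) x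
    simpa using this
  have hcnn : ∀ x, 0 ≤ c x := by
    intro x
    have h1 := hc.add_le x (-x)
    rw [add_neg_cancel, hc0, hcneg] at h1
    linarith
  have hcont : Continuous c := by
    refine (LipschitzWith.of_dist_le_mul (K := Real.toNNReal ucs) (f := c) fun u v => ?_).continuous
    rw [Real.dist_eq, dist_eq_norm, Real.coe_toNNReal _ hucs.le]
    have h1 : c u ≤ c v + c (u - v) := by
      have := hc.add_le v (u - v)
      have he : v + (u - v) = u := by abel
      rwa [he] at this
    have h2 : c v ≤ c u + c (v - u) := by
      have := hc.add_le u (v - u)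
      have he : u + (v - u) = v := by abel
      rwa [he] at this
    have h3 : c (u - v) ≤ ucs * ‖u - v‖ := hupp _
    have h4 : c (v - u) ≤ ucs * ‖u - v‖ := by
      have := hupp (v - u)
      rwa [norm_sub_rev] at this
    rw [abs_le]
    constructor <;> linarith
  -- minimizers
  choose p hp using fun x => moreau_exists_min hcont hc0 hcnn hη x
  set M := moreau c η with hMdef
  have hbdd : ∀ x : EuclideanSpace ℝ (Fin d),
      BddBelow (Set.range fun u => (c u) ^ 2 / 2 + ‖x - u‖ ^ 2 / (2 * η)) := by
    intro x
    refine ⟨0, ?_⟩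
    rintro _ ⟨u, rfl⟩
    positivity
  have hMle : ∀ x u, M x ≤ (c u) ^ 2 / 2 + ‖x - u‖ ^ 2 / (2 * η) := by
    intro x u
    rw [hMdef]
    simp only [moreau]
    exact ciInf_le (hbdd x) u
  have hMeq : ∀ x, M x = (c (p x)) ^ 2 / 2 + ‖x - p x‖ ^ 2 / (2 * η) := by
    intro x
    refine le_antisymm (hMle x (p x)) ?_
    rw [hMdef]
    simp only [moreau]
    exact le_ciInf (hp x)
  have hMnn : ∀ x, 0 ≤ M x := by
    intro x
    rw [hMdef]
    simp only [moreau]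
    exact le_ciInf fun u => by positivity
  set g := fun x => η⁻¹ • (x - p x) with hgdef
  -- quadratic upper bound (a)
  have ha : ∀ x y, M y ≤ M x + ⟪g x, y - x⟫ + ‖y - x‖ ^ 2 / (2 * η) := by
    intro x y
    have h1 : M y ≤ (c (p x)) ^ 2 / 2 + ‖y - p x‖ ^ 2 / (2 * η) := hMle y (p x)
    have h2 : y - p x = (y - x) + (x - p x) := by abel
    rw [h2, norm_add_sq_real] at h1
    have h3 : ⟪g x, y - x⟫ = η⁻¹ * ⟪x - p x, y - x⟫ := real_inner_smul_left _ _ _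
    have h4 : ⟪y - x, x - p x⟫ = ⟪x - p x, y - x⟫ := real_inner_comm _ _
    rw [h4] at h1
    rw [hMeq x, h3]
    have h5 : (‖y - x‖ ^ 2 + 2 * ⟪x - p x, y - x⟫ + ‖x - p x‖ ^ 2) / (2 * η)
        = ‖x - p x‖ ^ 2 / (2 * η) + η⁻¹ * ⟪x - p x, y - x⟫ + ‖y - x‖ ^ 2 / (2 * η) := by
      field_simp
      ring
    linarith [h1, h5]
  -- convexity
  have hconv : ConvexOn ℝ Set.univ M := by
    refine ⟨convex_univ, fun x _ y _ a b ha0 hb0 hab => ?_⟩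
    have hcc : c (a • p x + b • p y) ≤ a * c (p x) + b * c (p y) := by
      refine (hc.add_le _ _).trans ?_
      rw [hc.smul_eq, hc.smul_eq, abs_of_nonneg ha0, abs_of_nonneg hb0]
    have hcc2 : (c (a • p x + b • p y)) ^ 2 ≤ a * (c (p x)) ^ 2 + b * (c (p y)) ^ 2 :=
      (pow_le_pow_left₀ (hcnn _) hcc 2).trans (sq_combo ha0 hb0 hab)
    have hvec : a • x + b • y - (a • p x + b • p y) = a • (x - p x) + b • (y - p y) := by
      module
    have hnn : ‖a • x + b • y - (a • p x + b • p y)‖ ≤ a * ‖x - p x‖ + b * ‖y - p y‖ := by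
      rw [hvec]
      refine (norm_add_le _ _).trans ?_
      rw [norm_smul, norm_smul, Real.norm_eq_abs, Real.norm_eq_abs,
        abs_of_nonneg ha0, abs_of_nonneg hb0]
    have hnn2 : ‖a • x + b • y - (a • p x + b • p y)‖ ^ 2
        ≤ a * ‖x - p x‖ ^ 2 + b * ‖y - p y‖ ^ 2 :=
      (pow_le_pow_left₀ (norm_nonneg _) hnn 2).trans (sq_combo ha0 hb0 hab)
    have h5 : M (a • x + b • y) ≤ (c (a • p x + b • p y)) ^ 2 / 2
        + ‖a • x + b • y - (a • p x + b • p y)‖ ^ 2 / (2 * η) := hMle _ _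
    rw [smul_eq_mul, smul_eq_mul, hMeq x, hMeq y]
    calc M (a • x + b • y) ≤ _ := h5
      _ ≤ (a * (c (p x)) ^ 2 + b * (c (p y)) ^ 2) / 2
          + (a * ‖x - p x‖ ^ 2 + b * ‖y - p y‖ ^ 2) / (2 * η) := by gcongr
      _ = a * ((c (p x)) ^ 2 / 2 + ‖x - p x‖ ^ 2 / (2 * η))
          + b * ((c (p y)) ^ 2 / 2 + ‖y - p y‖ ^ 2 / (2 * η)) := by
          field_simp
          ring
  -- two-sided quadratic bound
  have hts : ∀ x z, |M z - M x - ⟪g x, z - x⟫| ≤ ‖z - x‖ ^ 2 / (2 * η) := by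
    intro x z
    have h1 := ha x z
    have h2 := ha x (x + (x - z))
    rw [add_sub_cancel_left] at h2
    have h3 : M x ≤ (1/2 : ℝ) * M z + (1/2 : ℝ) * M (x + (x - z)) := by
      have hx : (1/2 : ℝ) • z + (1/2 : ℝ) • (x + (x - z)) = x := by module
      have h := hconv.2 (Set.mem_univ z) (Set.mem_univ (x + (x - z)))
        (by norm_num : (0:ℝ) ≤ 1/2) (by norm_num : (0:ℝ) ≤ 1/2) (by norm_num)
      rw [hx] at h
      simpa using h
    have h4 : ⟪g x, x - z⟫ = -⟪g x, z - x⟫ := by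
      rw [show x - z = -(z - x) by abel, inner_neg_right]
    have h5 : ‖x - z‖ = ‖z - x‖ := norm_sub_rev _ _
    rw [h4, h5] at h2
    rw [abs_le]
    constructor <;> linarith
  -- subgradient inequality (b)
  have hb : ∀ x y, M x + ⟪g x, y - x⟫ ≤ M y := by
    intro x y
    have hC : (0:ℝ) ≤ ‖y - x‖ ^ 2 / (2 * η) := by positivity
    have key : ⟪g x, y - x⟫ ≤ M y - M x := by
      refine limit_aux hC ?_
      intro t ht0 ht1
      have h1 := hts x (x + t • (y - x))
      rw [add_sub_cancel_left] at h1
      have h2 : M (x + t • (y - x)) ≤ (1 - t) * M x + t * M y := by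
        have hx : (1 - t) • x + t • y = x + t • (y - x) := by module
        have h := hconv.2 (Set.mem_univ x) (Set.mem_univ y) (sub_nonneg.2 ht1) ht0.le
          (by ring)
        rw [hx] at h
        simpa using h
      have h3 : ⟪g x, t • (y - x)⟫ = t * ⟪g x, y - x⟫ := real_inner_smul_right _ _ _
      have h4 : ‖t • (y - x)‖ ^ 2 = t ^ 2 * ‖y - x‖ ^ 2 := by
        rw [norm_smul, Real.norm_eq_abs, abs_of_pos ht0, mul_pow]
      rw [h3, h4, abs_le] at h1
      have h6 : t * ⟪g x, y - x⟫ ≤ t * (M y - M x + t * (‖y - x‖ ^ 2 / (2 * η))) := by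
        have e5 : t * (M y - M x + t * (‖y - x‖ ^ 2 / (2 * η)))
            = t * M y - t * M x + t ^ 2 * ‖y - x‖ ^ 2 / (2 * η) := by ring
        have e6 : (1 - t) * M x + t * M y = M x - t * M x + t * M y := by ring
        rw [e5]
        rw [e6] at h2
        linarith [h1.1, h2]
      exact le_of_mul_le_mul_left h6 ht0
    linarith
  -- gradient
  have hgrad : ∀ x, HasGradientAt M (g x) x := by
    intro x
    rw [hasGradientAt_iff_hasFDerivAt, hasFDerivAt_iff_isLittleO_nhds_zero]
    rw [Asymptotics.isLittleO_iff]
    intro ε hε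
    filter_upwards [Metric.ball_mem_nhds (0 : EuclideanSpace ℝ (Fin d))
      (mul_pos (mul_pos two_pos hη) hε)] with h hh
    rw [mem_ball_zero_iff] at hh
    have h1 := hts x (x + h)
    rw [add_sub_cancel_left] at h1
    rw [InnerProductSpace.toDual_apply_apply, Real.norm_eq_abs]
    refine h1.trans ?_
    rw [div_le_iff₀ (by positivity)]
    nlinarith [norm_nonneg h, hh]
  have hgradeq : ∀ x, gradient M x = g x := fun x => (hgrad x).gradient
  have hdiff : Differentiable ℝ M := fun x => (hgrad x).hasFDerivAt.differentiableAt
  -- Lipschitz gradient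
  have hstep : ∀ x y, M x + ⟪g x, y - x⟫ + (η/2) * ‖g y - g x‖ ^ 2 ≤ M y := by
    intro x y
    have h1 := hb x (y - η • (g y - g x))
    have h2 := ha y (y - η • (g y - g x))
    have e1 : y - η • (g y - g x) - y = -(η • (g y - g x)) := by abel
    have e2 : y - η • (g y - g x) - x = (y - x) - η • (g y - g x) := by abel
    rw [e2, inner_sub_right, real_inner_smul_right] at h1
    rw [e1, inner_neg_right, real_inner_smul_right, norm_neg, norm_smul, Real.norm_eq_abs,
      abs_of_pos hη, mul_pow] at h2
    have e3 : ⟪g y, g y - g x⟫ - ⟪g x, g y - g x⟫ = ‖g y - g x‖ ^ 2 := by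
      rw [← inner_sub_left, real_inner_self_eq_norm_sq]
    have e4 : η ^ 2 * ‖g y - g x‖ ^ 2 / (2 * η) = (η/2) * ‖g y - g x‖ ^ 2 := by
      field_simp
    have e3' : η * ⟪g y, g y - g x⟫ - η * ⟪g x, g y - g x⟫ = η * ‖g y - g x‖ ^ 2 := by
      linear_combination η * e3
    linarith [h1, h2, e3', e4]
  have hlip : ∀ x y, ‖gradient M x - gradient M y‖ ≤ (1 / η) * ‖x - y‖ := by
    intro x y
    rw [hgradeq x, hgradeq y]
    have h1 := hstep x y
    have h2 := hstep y x
    have e1 : ⟪g y, x - y⟫ = -⟪g y, y - x⟫ := by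
      rw [show x - y = -(y - x) by abel, inner_neg_right]
    rw [e1, norm_sub_rev (g x) (g y)] at h2
    have h3 : η * ‖g y - g x‖ ^ 2 ≤ ⟪g y - g x, y - x⟫ := by
      rw [inner_sub_left]
      linarith [h1, h2]
    have h4 : ⟪g y - g x, y - x⟫ ≤ ‖g y - g x‖ * ‖y - x‖ := real_inner_le_norm _ _
    rw [norm_sub_rev (g x) (g y), norm_sub_rev x y, show (1/η) * ‖y - x‖ = ‖y - x‖ / η by ring,
      le_div_iff₀ hη]
    rcases eq_or_lt_of_le (norm_nonneg (g y - g x)) with h0 | h0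
    · rw [← h0, zero_mul]
      exact norm_nonneg _
    · nlinarith [h3.trans h4, h0]
  -- homogeneity
  have hscale_le : ∀ t : ℝ, 0 < t → ∀ x, M (t • x) ≤ t ^ 2 * M x := by
    intro t ht x
    have h1 : M (t • x) ≤ (c (t • p x)) ^ 2 / 2 + ‖t • x - t • p x‖ ^ 2 / (2 * η) := hMle _ _
    rw [hc.smul_eq, abs_of_pos ht, ← smul_sub, norm_smul, Real.norm_eq_abs, abs_of_pos ht] at h1
    rw [hMeq x]
    calc M (t • x) ≤ _ := h1
      _ = t ^ 2 * ((c (p x)) ^ 2 / 2 + ‖x - p x‖ ^ 2 / (2 * η)) := by ring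
  have hscale : ∀ t : ℝ, 0 < t → ∀ x, M (t • x) = t ^ 2 * M x := by
    intro t ht x
    refine le_antisymm (hscale_le t ht x) ?_
    have h2 := hscale_le t⁻¹ (by positivity) (t • x)
    rw [smul_smul, inv_mul_cancel₀ ht.ne', one_smul] at h2
    have h3 := mul_le_mul_of_nonneg_left h2 (le_of_lt (show (0:ℝ) < t ^ 2 by positivity))
    calc t ^ 2 * M x ≤ t ^ 2 * (t⁻¹ ^ 2 * M (t • x)) := h3
      _ = M (t • x) := by
          field_simp
  have hneg_le : ∀ x, M (-x) ≤ M x := by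
    intro x
    have h1 : M (-x) ≤ (c (-(p x))) ^ 2 / 2 + ‖-x - -(p x)‖ ^ 2 / (2 * η) := hMle _ _
    rw [hcneg, show -x - -(p x) = -(x - p x) by abel, norm_neg] at h1
    rw [hMeq x]
    exact h1
  have hnegM : ∀ x, M (-x) = M x := fun x =>
    le_antisymm (hneg_le x) (by have := hneg_le (-x); rwa [neg_neg] at this)
  have hM0 : M 0 = 0 := by
    refine le_antisymm ?_ (hMnn 0)
    have := hMle 0 0
    simpa [hc0] using this
  have hsq : ∀ (r : ℝ) (x : EuclideanSpace ℝ (Fin d)), M (r • x) = r ^ 2 * M x := by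
    intro r x
    rcases lt_trichotomy r 0 with h | h | h
    · have he : r • x = -((-r) • x) := by module
      rw [he, hnegM, hscale (-r) (by linarith) x]
      ring
    · rw [h, zero_smul, hM0]
      ring
    · exact hscale r h x
  -- bounds
  have hL : (0:ℝ) < 1 + η * lcs ^ 2 := by positivity
  have hU : (0:ℝ) < 1 + η * ucs ^ 2 := by positivity
  have hlb : ∀ x, (c x) ^ 2 / (2 * (1 + η * ucs ^ 2)) ≤ M x := by
    intro x
    rw [hMdef]
    simp only [moreau]
    refine le_ciInf fun u => ?_
    have hcx : c x ≤ c u + ucs * ‖x - u‖ := by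
      have h1 := hc.add_le u (x - u)
      have he : u + (x - u) = x := by abel
      rw [he] at h1
      exact h1.trans (by linarith [hupp (x - u)])
    have hsq1 : (c x) ^ 2 ≤ (c u + ucs * ‖x - u‖) ^ 2 := pow_le_pow_left₀ (hcnn x) hcx 2
    have key : (c u + ucs * ‖x - u‖) ^ 2 * η
        ≤ (1 + η * ucs ^ 2) * ((c u) ^ 2 * η + ‖x - u‖ ^ 2) := by
      nlinarith [sq_nonneg (η * ucs * c u - ‖x - u‖)]
    rw [div_le_iff₀ (by positivity)]
    have hexp : ((c u) ^ 2 / 2 + ‖x - u‖ ^ 2 / (2 * η)) * (2 * (1 + η * ucs ^ 2))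
        = (1 + η * ucs ^ 2) * ((c u) ^ 2 * η + ‖x - u‖ ^ 2) / η := by
      field_simp
    rw [hexp, le_div_iff₀ hη]
    calc (c x) ^ 2 * η ≤ (c u + ucs * ‖x - u‖) ^ 2 * η :=
          mul_le_mul_of_nonneg_right hsq1 hη.le
      _ ≤ _ := key
  have hub : ∀ x, M x ≤ (c x) ^ 2 / (2 * (1 + η * lcs ^ 2)) := by
    intro x
    have ht0 : (0:ℝ) < 1 / (1 + η * lcs ^ 2) := by positivity
    have ht1 : 1 / (1 + η * lcs ^ 2) ≤ 1 := by
      rw [div_le_one hL]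
      nlinarith
    have h1 : M x ≤ (c ((1 / (1 + η * lcs ^ 2)) • x)) ^ 2 / 2
        + ‖x - (1 / (1 + η * lcs ^ 2)) • x‖ ^ 2 / (2 * η) := hMle _ _
    rw [hc.smul_eq, abs_of_pos ht0] at h1
    have hx2 : x - (1 / (1 + η * lcs ^ 2)) • x = (1 - 1 / (1 + η * lcs ^ 2)) • x := by
      module
    rw [hx2, norm_smul, Real.norm_eq_abs, abs_of_nonneg (by linarith), mul_pow, mul_pow] at h1
    have hnx : ‖x‖ ^ 2 ≤ (c x) ^ 2 / lcs ^ 2 := by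
      rw [le_div_iff₀ (by positivity)]
      calc ‖x‖ ^ 2 * lcs ^ 2 = (lcs * ‖x‖) ^ 2 := by ring
        _ ≤ (c x) ^ 2 := pow_le_pow_left₀ (by positivity) (hlow x) 2
    have h2 : (1 - 1 / (1 + η * lcs ^ 2)) ^ 2 * ‖x‖ ^ 2
        ≤ (1 - 1 / (1 + η * lcs ^ 2)) ^ 2 * ((c x) ^ 2 / lcs ^ 2) :=
      mul_le_mul_of_nonneg_left hnx (by positivity)
    have h3 : (1 / (1 + η * lcs ^ 2)) ^ 2 * (c x) ^ 2 / 2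
        + (1 - 1 / (1 + η * lcs ^ 2)) ^ 2 * ((c x) ^ 2 / lcs ^ 2) / (2 * η)
        = (c x) ^ 2 / (2 * (1 + η * lcs ^ 2)) := by
      field_simp
      ring
    calc M x ≤ (1 / (1 + η * lcs ^ 2)) ^ 2 * (c x) ^ 2 / 2
          + (1 - 1 / (1 + η * lcs ^ 2)) ^ 2 * ‖x‖ ^ 2 / (2 * η) := h1
      _ ≤ (1 / (1 + η * lcs ^ 2)) ^ 2 * (c x) ^ 2 / 2
          + (1 - 1 / (1 + η * lcs ^ 2)) ^ 2 * ((c x) ^ 2 / lcs ^ 2) / (2 * η) := by gcongr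
      _ = _ := h3
  -- the norm m
  set m := fun x : EuclideanSpace ℝ (Fin d) => Real.sqrt (2 * M x) with hmdef
  have hmx : ∀ x, m x = Real.sqrt (2 * M x) := fun x => rfl
  have hm_sq : ∀ x, m x ^ 2 = 2 * M x := fun x => Real.sq_sqrt (by linarith [hMnn x])
  have hm_nn : ∀ x, 0 ≤ m x := fun x => Real.sqrt_nonneg _
  have hMm : ∀ x, M x = m x ^ 2 / 2 := fun x => by rw [hm_sq]; ring
  have hm0 : m 0 = 0 := by
    rw [hmx, hM0]
    simp
  have hm_smul : ∀ (r : ℝ) x, m (r • x) = |r| * m x := by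
    intro r x
    rw [hmx, hmx, hsq r x, show 2 * (r ^ 2 * M x) = r ^ 2 * (2 * M x) by ring,
      Real.sqrt_mul (sq_nonneg r), Real.sqrt_sq_eq_abs]
  have hm_pos : ∀ x, x ≠ 0 → 0 < m x := by
    intro x hx
    apply Real.sqrt_pos.2
    have h2 : 0 < c x := hc.pos x hx
    have h3 : 0 < (c x) ^ 2 / (2 * (1 + η * ucs ^ 2)) := by positivity
    linarith [hlb x]
  have hm_add : ∀ x y, m (x + y) ≤ m x + m y := by
    intro x y
    by_cases hx : x = 0
    · rw [hx, zero_add, hm0, zero_add]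
    by_cases hy : y = 0
    · rw [hy, add_zero, hm0, add_zero]
    have hs : 0 < m x := hm_pos x hx
    have ht : 0 < m y := hm_pos y hy
    have hst : 0 < m x + m y := by linarith
    have hkey : 2 * M (x + y) ≤ (m x + m y) ^ 2 := by
      have hxy : x + y = (m x + m y) • ((m x / (m x + m y)) • ((m x)⁻¹ • x)
          + (m y / (m x + m y)) • ((m y)⁻¹ • y)) := by
        match_scalars <;> field_simp
      have hcomb := hconv.2 (Set.mem_univ ((m x)⁻¹ • x)) (Set.mem_univ ((m y)⁻¹ • y))
        (le_of_lt (show (0:ℝ) < m x / (m x + m y) by positivity))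
        (le_of_lt (show (0:ℝ) < m y / (m x + m y) by positivity))
        (by rw [← add_div, div_self hst.ne'])
      have h1 : M ((m x)⁻¹ • x) = 1/2 := by
        rw [hsq, hMm x]
        field_simp
      have h2 : M ((m y)⁻¹ • y) = 1/2 := by
        rw [hsq, hMm y]
        field_simp
      rw [h1, h2, smul_eq_mul, smul_eq_mul] at hcomb
      have h5 : m x / (m x + m y) * (1/2) + m y / (m x + m y) * (1/2) = 1/2 := by
        field_simp
      rw [hxy, hscale _ hst]
      nlinarith [hcomb, h5, sq_nonneg (m x + m y)]
    calc m (x + y) = Real.sqrt (2 * M (x + y)) := hmx _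
      _ ≤ Real.sqrt ((m x + m y) ^ 2) := Real.sqrt_le_sqrt hkey
      _ = m x + m y := Real.sqrt_sq hst.le
  have hmnorm : IsNormLike m := ⟨hm_add, hm_smul, hm_pos⟩
  -- bounds in sqrt form
  have hbound : ∀ x, Real.sqrt (1 + η * lcs ^ 2) * m x ≤ c x ∧
      c x ≤ Real.sqrt (1 + η * ucs ^ 2) * m x := by
    intro x
    constructor
    · have h1 : (1 + η * lcs ^ 2) * (2 * M x) ≤ (c x) ^ 2 := by
        have h2 : M x * (2 * (1 + η * lcs ^ 2)) ≤ (c x) ^ 2 := by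
          rw [← le_div_iff₀ (by positivity)]
          exact hub x
        nlinarith [h2]
      calc Real.sqrt (1 + η * lcs ^ 2) * m x
          = Real.sqrt ((1 + η * lcs ^ 2) * (2 * M x)) := by
            rw [hmx, Real.sqrt_mul hL.le]
        _ ≤ Real.sqrt ((c x) ^ 2) := Real.sqrt_le_sqrt h1
        _ = c x := Real.sqrt_sq (hcnn x)
    · have h1 : (c x) ^ 2 ≤ (1 + η * ucs ^ 2) * (2 * M x) := by
        have h2 : (c x) ^ 2 / (2 * (1 + η * ucs ^ 2)) ≤ M x := hlb x
        rw [div_le_iff₀ (by positivity)] at h2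
        nlinarith [h2]
      calc c x = Real.sqrt ((c x) ^ 2) := (Real.sqrt_sq (hcnn x)).symm
        _ ≤ Real.sqrt ((1 + η * ucs ^ 2) * (2 * M x)) := Real.sqrt_le_sqrt h1
        _ = Real.sqrt (1 + η * ucs ^ 2) * m x := by
            rw [hmx, Real.sqrt_mul hU.le]
  -- inner product bound
  have hinner : ∀ x y, ⟪g x, y⟫ ≤ m x * m y := by
    intro x y
    have hC : (0:ℝ) ≤ m y ^ 2 / 2 + ‖y‖ ^ 2 / (2 * η) := by positivity
    refine limit_aux hC ?_
    intro t ht0 ht1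
    have h1 := hts x (x + t • y)
    rw [add_sub_cancel_left] at h1
    have h2 : M (x + t • y) ≤ (m x + t * m y) ^ 2 / 2 := by
      have h3 : m (x + t • y) ≤ m x + t * m y := by
        calc m (x + t • y) ≤ m x + m (t • y) := hm_add x (t • y)
          _ = m x + t * m y := by rw [hm_smul, abs_of_pos ht0]
      have h5 : (m (x + t • y)) ^ 2 ≤ (m x + t * m y) ^ 2 :=
        pow_le_pow_left₀ (hm_nn _) h3 2
      have h4 := hMm (x + t • y)
      linarith
    have h6 : ⟪g x, t • y⟫ = t * ⟪g x, y⟫ := real_inner_smul_right _ _ _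
    have h7 : ‖t • y‖ ^ 2 = t ^ 2 * ‖y‖ ^ 2 := by
      rw [norm_smul, Real.norm_eq_abs, abs_of_pos ht0, mul_pow]
    rw [h6, h7, abs_le] at h1
    have h8 : t * ⟪g x, y⟫ ≤ t * (m x * m y + t * (m y ^ 2 / 2 + ‖y‖ ^ 2 / (2 * η))) := by
      have e5 : t * (m x * m y + t * (m y ^ 2 / 2 + ‖y‖ ^ 2 / (2 * η)))
          = t * (m x * m y) + t ^ 2 * (m y ^ 2) / 2 + t ^ 2 * ‖y‖ ^ 2 / (2 * η) := by ring
      have e6 : (m x + t * m y) ^ 2 / 2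
          = m x ^ 2 / 2 + t * (m x * m y) + t ^ 2 * (m y ^ 2) / 2 := by ring
      rw [e5]
      rw [e6] at h2
      linarith [h1.1, h2, hMm x]
    exact le_of_mul_le_mul_left h8 ht0
  refine ⟨⟨hconv, hdiff, hlip⟩, m, hmnorm, hMm, hbound, fun x y => ?_⟩
  rw [hgradeq x]
  exact hinner x y
end
end

section
/- For every γ ∈ (0,1) and every norm ‖·‖_c on ℝ^d there exist η > 0 and ᾱ > 0 such that, for every γ-contractive operator T with respect to ‖·‖_c and every α ∈ (0, ᾱ]: (i) for all θ, θ' ∈ ℝ^d, M_η( (1−α)(θ − θ') + α(T(θ) − T(θ')) ) ≤ (1 − α(1 − √γ)) M_η(θ − θ'); consequently (ii) if two SA trajectories θ^{[1]}_{t+1} = θ^{[1]}_t + α(T(θ^{[1]}_t) − θ^{[1]}_t + w_t) and θ^{[2]}_{t+1} = θ^{[2]}_t + α(T(θ^{[2]}_t) − θ^{[2]}_t + w_t) are driven by the same noise sequence (w_t), then for all t ≥ 0, ‖θ^{[1]}_t − θ^{[2]}_t‖_c² ≤ (u_cm²/l_cm²) (1 − α(1 − √γ))^t ‖θ^{[1]}_0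 − θ^{[2]}_0‖_c², where l_cm = (1+η l_cs²)^{1/2} and u_cm = (1+η u_cs²)^{1/2}. -/
open MeasureTheory

noncomputable section

set_option maxHeartbeats 1000000 in
theorem stmt_3 {d : ℕ} (γ : ℝ) (hγ : γ ∈ Set.Ioo (0:ℝ) 1)
    (c : EuclideanSpace ℝ (Fin d) → ℝ) (hc : IsNormLike c)
    (lcs ucs : ℝ) (hlcs : 0 < lcs) (hucs : 0 < ucs)
    (hlow : ∀ x, lcs * ‖x‖ ≤ c x) (hupp : ∀ x, c x ≤ ucs * ‖x‖) :
    ∃ η > 0, ∃ ᾱ > 0,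
      ∀ T : EuclideanSpace ℝ (Fin d) → EuclideanSpace ℝ (Fin d),
        (∀ θ θ', c (T θ - T θ') ≤ γ * c (θ - θ')) →
        ∀ α ∈ Set.Ioc (0:ℝ) ᾱ,
          (∀ θ θ' : EuclideanSpace ℝ (Fin d),
            moreau c η ((1 - α) • (θ - θ') + α • (T θ - T θ')) ≤
              (1 - α * (1 - Real.sqrt γ)) * moreau c η (θ - θ')) ∧
          (∀ w θ1 θ2 : ℕ → EuclideanSpace ℝ (Fin d),
            (∀ t, θ1 (t + 1) = θ1 t + α • (T (θ1 t) - θ1 t + w t)) →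
            (∀ t, θ2 (t + 1) = θ2 t + α • (T (θ2 t) - θ2 t + w t)) →
            ∀ t, (c (θ1 t - θ2 t)) ^ 2 ≤
              ((1 + η * ucs ^ 2) / (1 + η * lcs ^ 2)) * (1 - α * (1 - Real.sqrt γ)) ^ t
                * (c (θ1 0 - θ2 0)) ^ 2) := by
  obtain ⟨hγ0, hγ1⟩ := hγ
  have hs0 : 0 < Real.sqrt γ := Real.sqrt_pos.2 hγ0
  have hs2 : Real.sqrt γ ^ 2 = γ := Real.sq_sqrt hγ0.le
  have hs1 : Real.sqrt γ < 1 := by nlinarith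
  set s := Real.sqrt γ with hsdef
  have hη0 : 0 < (1 - γ) / (γ * ucs ^ 2) := div_pos (by linarith) (by positivity)
  refine ⟨(1 - γ) / (γ * ucs ^ 2), hη0, 1, one_pos, ?_⟩
  set η := (1 - γ) / (γ * ucs ^ 2) with hηdef
  intro T hT α hα
  obtain ⟨hα0, hα1⟩ := hα
  have hγucm : γ * (1 + η * ucs ^ 2) = 1 := by
    rw [hηdef]; field_simp
    ring
  clear_value η
  have hc0 : ∀ x, 0 ≤ c x := fun x => le_trans (by positivity) (hlow x)
  set g : EuclideanSpace ℝ (Fin d) → EuclideanSpace ℝ (Fin d) → ℝ :=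
    fun x u => (c u) ^ 2 / 2 + ‖x - u‖ ^ 2 / (2 * η) with hgdef
  have hMg : ∀ x, moreau c η x = ⨅ u, g x u := fun _ => rfl
  clear_value g
  have hgnn : ∀ x u, 0 ≤ g x u := fun x u => by
    have h1 := hc0 u
    have h2 : (0:ℝ) ≤ ‖x - u‖ ^ 2 / (2 * η) := by positivity
    simp only [hgdef]
    nlinarith [sq_nonneg (c u)]
  have hbdd : ∀ x, BddBelow (Set.range (g x)) :=
    fun x => ⟨0, by rintro _ ⟨u, rfl⟩; exact hgnn x u⟩
  have hMle : ∀ x u, moreau c η x ≤ g x u := fun x u => (hMg x) ▸ ciInf_le (hbdd x) u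
  have hMnn : ∀ x, 0 ≤ moreau c η x := fun x => (hMg x) ▸ le_ciInf (hgnn x)
  -- lower bound: γ (c x)² ≤ 2 g x u for all u
  have hlb : ∀ x u, γ * (c x) ^ 2 ≤ 2 * g x u := by
    intro x u
    have h1 : c x ≤ c u + ucs * ‖x - u‖ := by
      have h2 := hc.add_le u (x - u)
      have h3 := hupp (x - u)
      have h4 : u + (x - u) = x := by abel
      rw [h4] at h2; linarith
    have hb0 : (0:ℝ) ≤ ‖x - u‖ := norm_nonneg _
    have h1sq : (c x) ^ 2 ≤ (c u + ucs * ‖x - u‖) ^ 2 :=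
      pow_le_pow_left₀ (hc0 x) h1 2
    have Q : η * (c x) ^ 2 ≤ (1 + η * ucs ^ 2) * (η * (c u) ^ 2 + ‖x - u‖ ^ 2) := by
      nlinarith [mul_le_mul_of_nonneg_left h1sq hη0.le,
        sq_nonneg (‖x - u‖ - η * ucs * (c u)), hη0.le]
    have P : γ * η * (c x) ^ 2 ≤ η * (c u) ^ 2 + ‖x - u‖ ^ 2 := by
      have h5 := mul_le_mul_of_nonneg_left Q hγ0.le
      have h6 : γ * ((1 + η * ucs ^ 2) * (η * (c u) ^ 2 + ‖x - u‖ ^ 2))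
          = η * (c u) ^ 2 + ‖x - u‖ ^ 2 := by
        linear_combination (η * (c u) ^ 2 + ‖x - u‖ ^ 2) * hγucm
      nlinarith [h5, h6]
    have h2g : 2 * g x u = (c u) ^ 2 + ‖x - u‖ ^ 2 / η := by
      simp only [hgdef]; field_simp
    rw [h2g]
    rw [show γ * (c x) ^ 2 = (γ * η * (c x) ^ 2) / η by field_simp,
      show (c u) ^ 2 + ‖x - u‖ ^ 2 / η = (η * (c u) ^ 2 + ‖x - u‖ ^ 2) / η by
        field_simp]
    exact (div_le_div_iff_of_pos_right hη0).2 P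
  set ρ := 1 - α * (1 - s) with hρdef
  have hρpos : 0 < ρ := by nlinarith
  have hρ1 : ρ ≤ 1 := by nlinarith
  clear_value s
  -- key contraction
  have key : ∀ x y, c y ≤ γ * c x →
      moreau c η ((1 - α) • x + α • y) ≤ ρ * moreau c η x := by
    intro x y hxy
    have main : ∀ u, moreau c η ((1 - α) • x + α • y) ≤ ρ * g x u := by
      intro u
      set a := c u with hadef
      set b := ‖x - u‖ with hbdef
      set S := Real.sqrt (a ^ 2 + b ^ 2 / η) with hSdef
      have hS0 : 0 ≤ S := Real.sqrt_nonneg _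
      have hS2 : S ^ 2 = a ^ 2 + b ^ 2 / η := Real.sq_sqrt (by positivity)
      have haS : a ≤ S := by nlinarith [div_nonneg (sq_nonneg b) hη0.le, hc0 u]
      have h2g : 2 * g x u = S ^ 2 := by
        simp only [hgdef, hS2]; field_simp; ring
      have hcy : c y ≤ s * S := by
        have h1 := hlb x u
        have h2 : (c y) ^ 2 ≤ (s * S) ^ 2 := by
          have h3 : (c y) ^ 2 ≤ γ ^ 2 * (c x) ^ 2 := by
            nlinarith [pow_le_pow_left₀ (hc0 y) hxy 2]
          nlinarith [hs2, h2g, hγ0.le]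
        have h4 := Real.sqrt_le_sqrt h2
        rwa [Real.sqrt_sq (hc0 y), Real.sqrt_sq (mul_nonneg hs0.le hS0)] at h4
      have hccombo : c ((1 - α) • u + α • y) ≤ (1 - α) * a + α * (s * S) := by
        have h1 := hc.add_le ((1 - α) • u) (α • y)
        have h2 := hc.smul_eq (1 - α) u
        have h3 := hc.smul_eq α y
        rw [abs_of_nonneg (by linarith : (0:ℝ) ≤ 1 - α)] at h2
        rw [abs_of_nonneg hα0.le] at h3
        have h5 := mul_le_mul_of_nonneg_left hcy hα0.le
        rw [h2, h3] at h1; linarith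
      have hz : ((1 - α) • x + α • y) - ((1 - α) • u + α • y) = (1 - α) • (x - u) := by
        module
      have hnorm : ‖((1 - α) • x + α • y) - ((1 - α) • u + α • y)‖ = (1 - α) * b := by
        rw [hz, norm_smul, Real.norm_eq_abs, abs_of_nonneg (by linarith : (0:ℝ) ≤ 1 - α)]
      refine (hMle _ ((1 - α) • u + α • y)).trans ?_
      have hgz : g ((1 - α) • x + α • y) ((1 - α) • u + α • y)
          ≤ ((1 - α) * a + α * (s * S)) ^ 2 / 2 + ((1 - α) * b) ^ 2 / (2 * η) := by
        simp only [hgdef]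
        rw [hnorm]
        have h6 : (c ((1 - α) • u + α • y)) ^ 2 ≤ ((1 - α) * a + α * (s * S)) ^ 2 :=
          pow_le_pow_left₀ (hc0 _) hccombo 2
        linarith [h6]
      refine hgz.trans ?_
      have hbb : ((1 - α) * b) ^ 2 / (2 * η) = (1 - α) ^ 2 * (S ^ 2 - a ^ 2) / 2 := by
        have hb2 : b ^ 2 = η * (S ^ 2 - a ^ 2) := by
          rw [hS2]; field_simp; ring
        rw [mul_pow, hb2]; field_simp
      rw [hbb]
      have hgxu : g x u = S ^ 2 / 2 := by rw [← h2g]; ring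
      rw [hgxu]
      nlinarith [mul_nonneg (mul_nonneg (mul_nonneg hα0.le (by linarith : (0:ℝ) ≤ 1 - α)) hs0.le)
          (mul_nonneg hS0 (sub_nonneg.2 haS)),
        mul_nonneg (mul_nonneg hρpos.le (mul_nonneg hα0.le (by linarith : (0:ℝ) ≤ 1 - s)))
          (sq_nonneg S)]
    rw [hMg x, ← div_le_iff₀' hρpos]
    exact le_ciInf fun u => (div_le_iff₀' hρpos).2 (main u)
  refine ⟨fun θ θ' => key _ _ (hT θ θ'), ?_⟩
  intro w θ1 θ2 h1 h2 t
  have hrec : ∀ t, θ1 (t + 1) - θ2 (t + 1)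
      = (1 - α) • (θ1 t - θ2 t) + α • (T (θ1 t) - T (θ2 t)) := by
    intro t; rw [h1 t, h2 t]; module
  have hMt : ∀ t, moreau c η (θ1 t - θ2 t) ≤ ρ ^ t * moreau c η (θ1 0 - θ2 0) := by
    intro t
    induction t with
    | zero => simp
    | succ n ih =>
      calc moreau c η (θ1 (n + 1) - θ2 (n + 1))
          = moreau c η ((1 - α) • (θ1 n - θ2 n) + α • (T (θ1 n) - T (θ2 n))) := by
            rw [hrec n]
        _ ≤ ρ * moreau c η (θ1 n - θ2 n) := key _ _ (hT _ _)
        _ ≤ ρ * (ρ ^ n * moreau c η (θ1 0 - θ2 0)) :=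
            mul_le_mul_of_nonneg_left ih hρpos.le
        _ = ρ ^ (n + 1) * moreau c η (θ1 0 - θ2 0) := by ring
  -- upper bound: 2 M x ≤ (c x)² / (1 + η lcs²)
  have hub : ∀ x, 2 * moreau c η x ≤ (c x) ^ 2 / (1 + η * lcs ^ 2) := by
    intro x
    have hL0 : (0:ℝ) < 1 + η * lcs ^ 2 := by positivity
    set L := 1 + η * lcs ^ 2 with hLdef
    have hL1 : 1 ≤ L := by nlinarith [mul_pos hη0 (pow_pos hlcs 2)]
    have hinv0 : (0:ℝ) ≤ 1 / L := by positivity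
    have hinv1 : 1 / L ≤ 1 := by rw [div_le_one hL0]; exact hL1
    have hcs : c ((1 / L) • x) = (1 / L) * c x := by
      rw [hc.smul_eq, abs_of_nonneg hinv0]
    have hxs : x - (1 / L) • x = (1 - 1 / L) • x := by module
    have hns : ‖x - (1 / L) • x‖ = (1 - 1 / L) * ‖x‖ := by
      rw [hxs, norm_smul, Real.norm_eq_abs, abs_of_nonneg (by linarith)]
    have h := hMle x ((1 / L) • x)
    have hg : g x ((1 / L) • x) = ((1 / L) * c x) ^ 2 / 2 + ((1 - 1 / L) * ‖x‖) ^ 2 / (2 * η) := by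
      simp only [hgdef]; rw [hcs, hns]
    have hx2 : lcs ^ 2 * ‖x‖ ^ 2 ≤ (c x) ^ 2 := by
      nlinarith [pow_le_pow_left₀ (by positivity : (0:ℝ) ≤ lcs * ‖x‖) (hlow x) 2]
    have hval : ((1 / L) * c x) ^ 2 / 2 + ((1 - 1 / L) * ‖x‖) ^ 2 / (2 * η)
        ≤ (c x) ^ 2 / L / 2 := by
      have hLsub : 1 - 1 / L = η * lcs ^ 2 / L := by
        rw [hLdef]; field_simp; ring
      have hLne : L ≠ 0 := ne_of_gt hL0
      rw [hLsub]
      have key2 : (c x) ^ 2 + η * lcs ^ 2 * (lcs ^ 2 * ‖x‖ ^ 2) ≤ L * (c x) ^ 2 := by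
        rw [hLdef]
        nlinarith [mul_le_mul_of_nonneg_left hx2 (mul_nonneg hη0.le (sq_nonneg lcs))]
      calc ((1 / L) * c x) ^ 2 / 2 + (η * lcs ^ 2 / L * ‖x‖) ^ 2 / (2 * η)
          = ((c x) ^ 2 + η * lcs ^ 2 * (lcs ^ 2 * ‖x‖ ^ 2)) / (2 * L ^ 2) := by
            field_simp
        _ ≤ (L * (c x) ^ 2) / (2 * L ^ 2) := by
            apply div_le_div_of_nonneg_right key2 (by positivity)
        _ = (c x) ^ 2 / L / 2 := by
            field_simp
    rw [hg] at h
    linarith [h, hval]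
  -- lower bound: γ (c x)² ≤ 2 M x
  have hlbM : ∀ x, γ * (c x) ^ 2 ≤ 2 * moreau c η x := by
    intro x
    have h5 : γ * (c x) ^ 2 / 2 ≤ moreau c η x := by
      rw [hMg x]
      refine le_ciInf fun u => ?_
      have h7 := hlb x u
      linarith
    linarith
  have hρt : 0 ≤ ρ ^ t := pow_nonneg hρpos.le t
  have hU0 : (0:ℝ) < 1 + η * ucs ^ 2 := by positivity
  have hL0 : (0:ℝ) < 1 + η * lcs ^ 2 := by positivity
  have A := hlbM (θ1 t - θ2 t)
  have B := hMt t
  have C := hub (θ1 0 - θ2 0)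
  have step1 : (c (θ1 t - θ2 t)) ^ 2 ≤ (1 + η * ucs ^ 2) * (2 * moreau c η (θ1 t - θ2 t)) := by
    have h5 := mul_le_mul_of_nonneg_left A hU0.le
    have h6 : (1 + η * ucs ^ 2) * (γ * (c (θ1 t - θ2 t)) ^ 2) = (c (θ1 t - θ2 t)) ^ 2 := by
      linear_combination (c (θ1 t - θ2 t)) ^ 2 * hγucm
    linarith
  calc (c (θ1 t - θ2 t)) ^ 2
      ≤ (1 + η * ucs ^ 2) * (2 * moreau c η (θ1 t - θ2 t)) := step1
    _ ≤ (1 + η * ucs ^ 2) * (2 * (ρ ^ t * moreau c η (θ1 0 - θ2 0))) := by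
        apply mul_le_mul_of_nonneg_left _ hU0.le
        linarith [B]
    _ = (1 + η * ucs ^ 2) * ρ ^ t * (2 * moreau c η (θ1 0 - θ2 0)) := by ring
    _ ≤ (1 + η * ucs ^ 2) * ρ ^ t * ((c (θ1 0 - θ2 0)) ^ 2 / (1 + η * lcs ^ 2)) := by
        apply mul_le_mul_of_nonneg_left C (mul_nonneg hU0.le hρt)
    _ = ((1 + η * ucs ^ 2) / (1 + η * lcs ^ 2)) * ρ ^ t * (c (θ1 0 - θ2 0)) ^ 2 := by
        field_simp
        try ring
end
end

section
/- Let T : ℝ^d → ℝ^d be γ-contractive with respect to a norm ‖·‖_c, let (w_t)_{t≥0} be i.i.d. zero-mean ℝ^d-valued random vectors with finite second moments, and let η, ᾱ be as in the pathwise coupling contraction (with l_cm = (1+η l_cs²)^{1/2}, u_cm = (1+η u_cs²)^{1/2}). For α ∈ (0, ᾱ], let θ₀ and θ₀' be ℝ^d-valued random vectors with finite second moments, and let θ₁ = θ₀ + α(T(θ₀) − θ₀ + w₀) and θ₁' = θ₀' + α(T(θ₀') − θ₀' + w₀) be one SA step from each. Then W₂²(law(θ₁), law(θ₁')) ≤ ρ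 · W₂²(law(θ₀), law(θ₀')), where ρ = (u_cm²/l_cm²)(1 − α(1 − √γ)) and W₂ is taken with respect to ‖·‖_c. -/
open MeasureTheory ProbabilityTheory

noncomputable section

/-- `π` is a coupling of `μ` and `ν`. -/
def IsCoupling {X : Type*} [MeasurableSpace X] (π : Measure (X × X)) (μ ν : Measure X) : Prop :=
  π.map Prod.fst = μ ∧ π.map Prod.snd = ν

/-- Squared Wasserstein-2 distance with respect to the norm-like function `c`. -/
def W2sq {X : Type*} [MeasurableSpace X] [AddGroup X] (c : X → ℝ) (μ ν : Measure X) : ℝ :=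
  sInf { r : ℝ | ∃ π : Measure (X × X), IsCoupling π μ ν ∧
    Integrable (fun p => (c (p.1 - p.2)) ^ 2) π ∧ r = ∫ p, (c (p.1 - p.2)) ^ 2 ∂π }

section helpers
variable {V : Type*} [AddCommGroup V] [Module ℝ V] {c : V → ℝ}

lemma IsNormLike.zero (hc : IsNormLike c) : c 0 = 0 := by
  have := hc.smul_eq 0 0; simpa using this

lemma IsNormLike.neg (hc : IsNormLike c) (x : V) : c (-x) = c x := by
  have := hc.smul_eq (-1) x; simpa using this

lemma IsNormLike.nonneg (hc : IsNormLike c) (x : V) : 0 ≤ c x := by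
  have h1 := hc.add_le x (-x)
  have h2 := hc.neg x
  have h3 := hc.zero
  simp at h1
  linarith

lemma IsNormLike.sub_le (hc : IsNormLike c) (x y : V) : c x ≤ c y + c (x - y) := by
  have := hc.add_le y (x - y); simpa using this

end helpers

lemma moreau_lower {d : ℕ} {c : EuclideanSpace ℝ (Fin d) → ℝ} (hc : IsNormLike c)
    {ucs η : ℝ} (hucs : 0 < ucs) (hη : 0 < η)
    (hupp : ∀ x, c x ≤ ucs * ‖x‖) (x : EuclideanSpace ℝ (Fin d)) :
    c x ^ 2 / (2 * (1 + η * ucs ^ 2)) ≤ moreau c η x := by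
  apply le_ciInf
  intro u
  have h1 : c x ≤ c u + ucs * ‖x - u‖ := (hc.sub_le x u).trans (by linarith [hupp (x - u)])
  have h2 : 0 ≤ c u := hc.nonneg u
  have h3 : (0:ℝ) ≤ ‖x - u‖ := norm_nonneg _
  have h4 : 0 ≤ c x := hc.nonneg x
  have e : c u ^ 2 / 2 + ‖x - u‖ ^ 2 / (2 * η) = (η * c u ^ 2 + ‖x - u‖ ^ 2) / (2 * η) := by
    field_simp
  rw [e, div_le_div_iff₀ (by positivity) (by positivity)]
  have ha2 : c x ^ 2 ≤ (c u + ucs * ‖x - u‖) ^ 2 := by nlinarith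
  nlinarith [sq_nonneg (‖x - u‖ - η * ucs * c u), sq_nonneg (c u + ucs * ‖x - u‖), hη.le]

lemma moreau_upper {d : ℕ} {c : EuclideanSpace ℝ (Fin d) → ℝ} (hc : IsNormLike c)
    {lcs η : ℝ} (hlcs : 0 < lcs) (hη : 0 < η)
    (hlow : ∀ x, lcs * ‖x‖ ≤ c x) (x : EuclideanSpace ℝ (Fin d)) :
    moreau c η x ≤ c x ^ 2 / (2 * (1 + η * lcs ^ 2)) := by
  have hb : (0:ℝ) < 1 + η * lcs ^ 2 := by positivity
  have hbdd : BddBelow (Set.range fun u : EuclideanSpace ℝ (Fin d) =>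
      (c u) ^ 2 / 2 + ‖x - u‖ ^ 2 / (2 * η)) := by
    refine ⟨0, ?_⟩
    rintro r ⟨u, rfl⟩
    have := hc.nonneg u
    positivity
  have key := ciInf_le hbdd (((1:ℝ)/(1 + η * lcs ^ 2)) • x)
  refine le_trans key ?_
  have hxu : x - ((1:ℝ)/(1 + η * lcs ^ 2)) • x = (η * lcs ^ 2/(1 + η * lcs ^ 2)) • x := by
    rw [show (η * lcs ^ 2/(1 + η * lcs ^ 2)) = 1 - 1/(1 + η * lcs ^ 2) by field_simp; ring,
      sub_smul, one_smul]
  rw [hxu, hc.smul_eq, norm_smul, Real.norm_eq_abs,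
    abs_of_pos (by positivity), abs_of_pos (by positivity)]
  have hN : lcs * ‖x‖ ≤ c x := hlow x
  have hN0 : (0:ℝ) ≤ ‖x‖ := norm_nonneg x
  have h4 : 0 ≤ c x := hc.nonneg x
  have hNle : ‖x‖ ≤ c x / lcs := by rw [le_div_iff₀ hlcs]; linarith
  have hx2 : ‖x‖ ^ 2 ≤ (c x / lcs) ^ 2 := by nlinarith
  have step : (1/(1 + η * lcs ^ 2) * c x) ^ 2 / 2 +
      (η * lcs ^ 2/(1 + η * lcs ^ 2) * ‖x‖) ^ 2 / (2 * η) ≤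
      (1/(1 + η * lcs ^ 2) * c x) ^ 2 / 2 +
      (η * lcs ^ 2/(1 + η * lcs ^ 2) * (c x / lcs)) ^ 2 / (2 * η) := by
    gcongr
  refine step.trans (le_of_eq ?_)
  field_simp

lemma normlike_continuous {d : ℕ} {c : EuclideanSpace ℝ (Fin d) → ℝ} (hc : IsNormLike c)
    {ucs : ℝ} (hucs : 0 < ucs) (hupp : ∀ x, c x ≤ ucs * ‖x‖) : Continuous c := by
  have h : ∀ x y : EuclideanSpace ℝ (Fin d), c x - c y ≤ ucs * ‖x - y‖ := fun x y => by
    have := hc.sub_le x y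
    have := hupp (x - y)
    linarith
  refine (LipschitzWith.of_dist_le_mul (K := ⟨ucs, hucs.le⟩) (f := c) ?_).continuous
  intro x y
  rw [Real.dist_eq, dist_eq_norm]
  rcases abs_cases (c x - c y) with ⟨he, _⟩ | ⟨he, _⟩
  · rw [he]; exact h x y
  · rw [he]
    have := h y x
    rw [show y - x = -(x-y) by abel, norm_neg] at this
    push_cast
    change -(c x - c y) ≤ ucs * ‖x - y‖
    linarith

lemma contraction_continuous {d : ℕ} {c : EuclideanSpace ℝ (Fin d) → ℝ}
    {γ lcs ucs : ℝ} (hγ : 0 < γ) (hlcs : 0 < lcs) (hucs : 0 < ucs)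
    (hlow : ∀ x, lcs * ‖x‖ ≤ c x) (hupp : ∀ x, c x ≤ ucs * ‖x‖)
    {T : EuclideanSpace ℝ (Fin d) → EuclideanSpace ℝ (Fin d)}
    (hT : ∀ θ θ', c (T θ - T θ') ≤ γ * c (θ - θ')) : Continuous T := by
  refine (LipschitzWith.of_dist_le_mul
    (K := ⟨γ * ucs / lcs, by positivity⟩) (f := T) ?_).continuous
  intro x y
  rw [dist_eq_norm, dist_eq_norm]
  have h1 := hlow (T x - T y)
  have h2 := hT x y
  have h3 := hupp (x - y)
  have h4 : γ * c (x - y) ≤ γ * (ucs * ‖x - y‖) := by nlinarith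
  push_cast
  change ‖T x - T y‖ ≤ γ * ucs / lcs * ‖x - y‖
  rw [div_mul_eq_mul_div, le_div_iff₀ hlcs]
  nlinarith

lemma key_ineq {d : ℕ} {c : EuclideanSpace ℝ (Fin d) → ℝ} (hc : IsNormLike c)
    {lcs ucs η : ℝ} (hlcs : 0 < lcs) (hucs : 0 < ucs) (hη : 0 < η)
    (hlow : ∀ x, lcs * ‖x‖ ≤ c x) (hupp : ∀ x, c x ≤ ucs * ‖x‖)
    (z v : EuclideanSpace ℝ (Fin d)) (K : ℝ)
    (h : moreau c η z ≤ K * moreau c η v) :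
    c z ^ 2 ≤ (1 + η * ucs ^ 2) / (1 + η * lcs ^ 2) * K * c v ^ 2 := by
  have hA : (0:ℝ) < 1 + η * ucs ^ 2 := by positivity
  have hB : (0:ℝ) < 1 + η * lcs ^ 2 := by positivity
  have lz := moreau_lower hc hucs hη hupp z
  have lv := moreau_lower hc hucs hη hupp v
  have uv := moreau_upper hc hlcs hη hlow v
  have hz0 : 0 ≤ c z := hc.nonneg z
  have hv0 : 0 ≤ c v := hc.nonneg v
  have h1 : c z ^ 2 ≤ moreau c η z * (2 * (1 + η * ucs ^ 2)) := (div_le_iff₀ (by positivity)).mp lz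
  rcases le_or_gt 0 K with hK | hK
  · have h2 : moreau c η z ≤ K * (c v ^ 2 / (2 * (1 + η * lcs ^ 2))) := h.trans (by nlinarith)
    calc c z ^ 2 ≤ moreau c η z * (2 * (1 + η * ucs ^ 2)) := h1
      _ ≤ K * (c v ^ 2 / (2 * (1 + η * lcs ^ 2))) * (2 * (1 + η * ucs ^ 2)) := by nlinarith
      _ = (1 + η * ucs ^ 2) / (1 + η * lcs ^ 2) * K * c v ^ 2 := by field_simp
  · have hmv0 : 0 ≤ moreau c η v := le_trans (by positivity) lv
    have hmz0 : 0 ≤ moreau c η z := le_trans (by positivity) lz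
    have hmv : moreau c η v = 0 := by nlinarith
    have hcv : c v = 0 := by
      have h5 := (div_le_iff₀ (show (0:ℝ) < 2 * (1 + η * ucs ^ 2) by positivity)).mp (hmv ▸ lv)
      nlinarith
    have hmz : moreau c η z ≤ 0 := by rw [hmv] at h; linarith [h]
    have hcz : c z = 0 := by
      have h5 : c z ^ 2 / (2 * (1 + η * ucs ^ 2)) ≤ 0 := lz.trans hmz
      have h6 := (div_le_iff₀ (show (0:ℝ) < 2 * (1 + η * ucs ^ 2) by positivity)).mp h5
      nlinarith
    rw [hcz, hcv]; norm_num
noncomputable section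

def Fstep {d : ℕ} (α : ℝ) (T : EuclideanSpace ℝ (Fin d) → EuclideanSpace ℝ (Fin d)) :
    EuclideanSpace ℝ (Fin d) × EuclideanSpace ℝ (Fin d) → EuclideanSpace ℝ (Fin d) :=
  fun p => p.1 + α • (T p.1 - p.1 + p.2)

def Gstep {d : ℕ} (α : ℝ) (T : EuclideanSpace ℝ (Fin d) → EuclideanSpace ℝ (Fin d)) :
    (EuclideanSpace ℝ (Fin d) × EuclideanSpace ℝ (Fin d)) × EuclideanSpace ℝ (Fin d) →
    EuclideanSpace ℝ (Fin d) × EuclideanSpace ℝ (Fin d) :=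
  fun q => (Fstep α T (q.1.1, q.2), Fstep α T (q.1.2, q.2))

lemma Fstep_cont {d : ℕ} (α : ℝ) {T : EuclideanSpace ℝ (Fin d) → EuclideanSpace ℝ (Fin d)}
    (hT : Continuous T) : Continuous (Fstep α T) := by
  unfold Fstep
  exact continuous_fst.add ((((hT.comp continuous_fst).sub continuous_fst).add
    continuous_snd).const_smul α)

lemma Gstep_cont {d : ℕ} (α : ℝ) {T : EuclideanSpace ℝ (Fin d) → EuclideanSpace ℝ (Fin d)}
    (hT : Continuous T) : Continuous (Gstep α T) := by
  unfold Gstep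
  exact ((Fstep_cont α hT).comp ((continuous_fst.comp continuous_fst).prodMk
      continuous_snd)).prodMk
    ((Fstep_cont α hT).comp ((continuous_snd.comp continuous_fst).prodMk continuous_snd))

lemma Fstep_diff {d : ℕ} (α : ℝ) (T : EuclideanSpace ℝ (Fin d) → EuclideanSpace ℝ (Fin d))
    (x y w : EuclideanSpace ℝ (Fin d)) :
    Fstep α T (x, w) - Fstep α T (y, w) = (1 - α) • (x - y) + α • (T x - T y) := by
  simp only [Fstep, sub_smul, one_smul, smul_add, smul_sub]
  abel
theorem stmt_5 {d : ℕ} (γ : ℝ) (hγ : γ ∈ Set.Ioo (0:ℝ) 1)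
    (c : EuclideanSpace ℝ (Fin d) → ℝ) (hc : IsNormLike c)
    (lcs ucs : ℝ) (hlcs : 0 < lcs) (hucs : 0 < ucs)
    (hlow : ∀ x, lcs * ‖x‖ ≤ c x) (hupp : ∀ x, c x ≤ ucs * ‖x‖)
    (T : EuclideanSpace ℝ (Fin d) → EuclideanSpace ℝ (Fin d))
    (hT : ∀ θ θ', c (T θ - T θ') ≤ γ * c (θ - θ'))
    (η ᾱ : ℝ) (hη : 0 < η) (hᾱ : 0 < ᾱ)
    (hM : ∀ α ∈ Set.Ioc (0:ℝ) ᾱ, ∀ θ θ' : EuclideanSpace ℝ (Fin d),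
      moreau c η ((1 - α) • (θ - θ') + α • (T θ - T θ')) ≤
        (1 - α * (1 - Real.sqrt γ)) * moreau c η (θ - θ'))
    {Ω : Type*} [MeasurableSpace Ω] (Pr : Measure Ω) [IsProbabilityMeasure Pr]
    (α : ℝ) (hα : α ∈ Set.Ioc (0:ℝ) ᾱ)
    (θ₀ θ₀' w₀ : Ω → EuclideanSpace ℝ (Fin d))
    (h₀meas : Measurable θ₀) (h₀'meas : Measurable θ₀') (hwmeas : Measurable w₀)
    (h₀mom : Integrable (fun ω => ‖θ₀ ω‖ ^ 2) Pr)
    (h₀'mom : Integrable (fun ω => ‖θ₀' ω‖ ^ 2) Pr)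
    (hwmom : Integrable (fun ω => ‖w₀ ω‖ ^ 2) Pr)
    (hindep : IndepFun w₀ θ₀ Pr) (hindep' : IndepFun w₀ θ₀' Pr)
    (θ₁ θ₁' : Ω → EuclideanSpace ℝ (Fin d))
    (hθ₁ : ∀ ω, θ₁ ω = θ₀ ω + α • (T (θ₀ ω) - θ₀ ω + w₀ ω))
    (hθ₁' : ∀ ω, θ₁' ω = θ₀' ω + α • (T (θ₀' ω) - θ₀' ω + w₀ ω)) :
    W2sq c (Measure.map θ₁ Pr) (Measure.map θ₁' Pr) ≤
      ((1 + η * ucs ^ 2) / (1 + η * lcs ^ 2)) * (1 - α * (1 - Real.sqrt γ)) *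
        W2sq c (Measure.map θ₀ Pr) (Measure.map θ₀' Pr) := by
  classical
  obtain ⟨hγ0, hγ1⟩ := hγ
  -- continuity and measurability facts
  have hccont : Continuous c := normlike_continuous hc hucs hupp
  have hTcont : Continuous T := contraction_continuous hγ0 hlcs hucs hlow hupp hT
  have hcostcont : Continuous (fun p : EuclideanSpace ℝ (Fin d) × EuclideanSpace ℝ (Fin d) => (c (p.1 - p.2)) ^ 2) :=
    (hccont.comp (continuous_fst.sub continuous_snd)).pow 2
  have hFmeas : Measurable (Fstep α T) := (Fstep_cont α hTcont).measurable
  have hGmeas : Measurable (Gstep α T) := (Gstep_cont α hTcont).measurable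
  have hθ₁eq : θ₁ = Fstep α T ∘ (fun ω => (θ₀ ω, w₀ ω)) := funext fun ω => by
    rw [Function.comp_apply, hθ₁ ω]; rfl
  have hθ₁'eq : θ₁' = Fstep α T ∘ (fun ω => (θ₀' ω, w₀ ω)) := funext fun ω => by
    rw [Function.comp_apply, hθ₁' ω]; rfl
  have hθ₁meas : Measurable θ₁ := by rw [hθ₁eq]; exact hFmeas.comp (h₀meas.prodMk hwmeas)
  have hθ₁'meas : Measurable θ₁' := by rw [hθ₁'eq]; exact hFmeas.comp (h₀'meas.prodMk hwmeas)
  -- the pointwise contraction bound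
  set ρ : ℝ := (1 + η * ucs ^ 2) / (1 + η * lcs ^ 2) * (1 - α * (1 - Real.sqrt γ)) with hρdef
  have hkey : ∀ x y : EuclideanSpace ℝ (Fin d), (c ((1 - α) • (x - y) + α • (T x - T y))) ^ 2 ≤ ρ * (c (x - y)) ^ 2 :=
    fun x y => key_ineq hc hlcs hucs hη hlow hupp _ _ _ (hM α hα x y)
  -- laws
  haveI : IsProbabilityMeasure (Pr.map θ₀) := Measure.isProbabilityMeasure_map h₀meas.aemeasurable
  haveI : IsProbabilityMeasure (Pr.map θ₀') := Measure.isProbabilityMeasure_map h₀'meas.aemeasurable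
  haveI : IsProbabilityMeasure (Pr.map w₀) := Measure.isProbabilityMeasure_map hwmeas.aemeasurable
  have hjoint : Pr.map (fun ω => (θ₀ ω, w₀ ω)) = (Pr.map θ₀).prod (Pr.map w₀) :=
    (indepFun_iff_map_prod_eq_prod_map_map h₀meas.aemeasurable hwmeas.aemeasurable).mp
      hindep.symm
  have hjoint' : Pr.map (fun ω => (θ₀' ω, w₀ ω)) = (Pr.map θ₀').prod (Pr.map w₀) :=
    (indepFun_iff_map_prod_eq_prod_map_map h₀'meas.aemeasurable hwmeas.aemeasurable).mp
      hindep'.symm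
  have hθ₁law : Pr.map θ₁ = ((Pr.map θ₀).prod (Pr.map w₀)).map (Fstep α T) := by
    rw [hθ₁eq, ← Measure.map_map hFmeas (h₀meas.prodMk hwmeas), hjoint]
  have hθ₁'law : Pr.map θ₁' = ((Pr.map θ₀').prod (Pr.map w₀)).map (Fstep α T) := by
    rw [hθ₁'eq, ← Measure.map_map hFmeas (h₀'meas.prodMk hwmeas), hjoint']
  -- natural couplings give nonemptiness
  have hnatint : ∀ f g : Ω → EuclideanSpace ℝ (Fin d), Measurable f → Measurable g →
      Integrable (fun ω => ‖f ω‖ ^ 2) Pr → Integrable (fun ω => ‖g ω‖ ^ 2) Pr →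
      Integrable (fun ω => (c (f ω - g ω)) ^ 2) Pr := by
    intro f g hf hg hf2 hg2
    refine Integrable.mono' (((hf2.add hg2).const_mul (2 * ucs ^ 2)))
      (((hccont.measurable.comp (hf.sub hg)).pow_const 2).aestronglyMeasurable) ?_
    filter_upwards with ω
    rw [Real.norm_eq_abs, abs_of_nonneg (sq_nonneg _)]
    have h1 : c (f ω - g ω) ≤ ucs * ‖f ω - g ω‖ := hupp _
    have h2 : ‖f ω - g ω‖ ≤ ‖f ω‖ + ‖g ω‖ := norm_sub_le _ _
    have h3 : 0 ≤ c (f ω - g ω) := hc.nonneg _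
    have h4 : (0:ℝ) ≤ ‖f ω - g ω‖ := norm_nonneg _
    have h5 : c (f ω - g ω) ^ 2 ≤ (ucs * ‖f ω - g ω‖) ^ 2 := pow_le_pow_left₀ h3 h1 2
    have h6 : ‖f ω - g ω‖ ^ 2 ≤ (‖f ω‖ + ‖g ω‖) ^ 2 := pow_le_pow_left₀ h4 h2 2
    show c (f ω - g ω) ^ 2 ≤ 2 * ucs ^ 2 * (‖f ω‖ ^ 2 + ‖g ω‖ ^ 2)
    nlinarith [sq_nonneg (‖f ω‖ - ‖g ω‖), sq_nonneg ucs, mul_pos hucs hucs]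
  have hnat : ∀ f g : Ω → EuclideanSpace ℝ (Fin d), Measurable f → Measurable g →
      Integrable (fun ω => ‖f ω‖ ^ 2) Pr → Integrable (fun ω => ‖g ω‖ ^ 2) Pr →
      (∫ ω, (c (f ω - g ω)) ^ 2 ∂Pr) ∈ {r : ℝ | ∃ π : Measure (EuclideanSpace ℝ (Fin d) × EuclideanSpace ℝ (Fin d)),
        IsCoupling π (Pr.map f) (Pr.map g) ∧
        Integrable (fun p => (c (p.1 - p.2)) ^ 2) π ∧ r = ∫ p, (c (p.1 - p.2)) ^ 2 ∂π} := by
    intro f g hf hg hf2 hg2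
    refine ⟨Pr.map (fun ω => (f ω, g ω)), ⟨?_, ?_⟩, ?_, ?_⟩
    · rw [Measure.map_map measurable_fst (hf.prodMk hg)]; rfl
    · rw [Measure.map_map measurable_snd (hf.prodMk hg)]; rfl
    · rw [integrable_map_measure hcostcont.aestronglyMeasurable
        (hf.prodMk hg).aemeasurable]
      exact hnatint f g hf hg hf2 hg2
    · exact (integral_map (hf.prodMk hg).aemeasurable hcostcont.aestronglyMeasurable).symm
  -- lower bound 0 on the coupling-cost sets
  have hbdd : ∀ μ ν : Measure (EuclideanSpace ℝ (Fin d)), BddBelow {r : ℝ | ∃ π : Measure (EuclideanSpace ℝ (Fin d) × EuclideanSpace ℝ (Fin d)),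
      IsCoupling π μ ν ∧ Integrable (fun p => (c (p.1 - p.2)) ^ 2) π ∧
      r = ∫ p, (c (p.1 - p.2)) ^ 2 ∂π} := by
    intro μ ν
    refine ⟨0, ?_⟩
    rintro r ⟨π, -, -, rfl⟩
    exact integral_nonneg fun p => sq_nonneg _
  -- main coupling construction
  have hstep : ∀ r : ℝ, r ∈ {r : ℝ | ∃ π : Measure (EuclideanSpace ℝ (Fin d) × EuclideanSpace ℝ (Fin d)),
      IsCoupling π (Pr.map θ₀) (Pr.map θ₀') ∧
      Integrable (fun p => (c (p.1 - p.2)) ^ 2) π ∧ r = ∫ p, (c (p.1 - p.2)) ^ 2 ∂π} →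
      ∃ r' ∈ {r : ℝ | ∃ π : Measure (EuclideanSpace ℝ (Fin d) × EuclideanSpace ℝ (Fin d)),
        IsCoupling π (Pr.map θ₁) (Pr.map θ₁') ∧
        Integrable (fun p => (c (p.1 - p.2)) ^ 2) π ∧ r = ∫ p, (c (p.1 - p.2)) ^ 2 ∂π},
        r' ≤ ρ * r := by
    rintro r ⟨π₀, ⟨hfst, hsnd⟩, hint, rfl⟩
    haveI : IsProbabilityMeasure π₀ := by
      constructor
      have h1 : π₀.map Prod.fst Set.univ = (Pr.map θ₀) Set.univ := by rw [hfst]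
      rw [Measure.map_apply measurable_fst MeasurableSet.univ, Set.preimage_univ] at h1
      rw [h1, measure_univ]
    set P := π₀.prod (Pr.map w₀) with hP
    set π₁ := P.map (Gstep α T) with hπ₁
    have hcompfst : Prod.fst ∘ (Gstep α T) = Fstep α T ∘ Prod.map Prod.fst id := rfl
    have hcompsnd : Prod.snd ∘ (Gstep α T) = Fstep α T ∘ Prod.map Prod.snd id := rfl
    have hm1 : π₁.map Prod.fst = Pr.map θ₁ := by
      rw [hπ₁, Measure.map_map measurable_fst hGmeas, hcompfst,
        ← Measure.map_map hFmeas (measurable_fst.prodMap measurable_id), hP,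
        ← Measure.map_prod_map _ _ measurable_fst measurable_id, hfst, Measure.map_id,
        hθ₁law]
    have hm2 : π₁.map Prod.snd = Pr.map θ₁' := by
      rw [hπ₁, Measure.map_map measurable_snd hGmeas, hcompsnd,
        ← Measure.map_map hFmeas (measurable_snd.prodMap measurable_id), hP,
        ← Measure.map_prod_map _ _ measurable_snd measurable_id, hsnd, Measure.map_id,
        hθ₁'law]
    -- the cost composed with Gstep
    have hHcont : Continuous (fun p : EuclideanSpace ℝ (Fin d) × EuclideanSpace ℝ (Fin d) =>
        (c ((1 - α) • (p.1 - p.2) + α • (T p.1 - T p.2))) ^ 2) := by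
      apply Continuous.pow
      exact hccont.comp ((((continuous_fst.sub continuous_snd)).const_smul (1 - α)).add
        (((hTcont.comp continuous_fst).sub (hTcont.comp continuous_snd)).const_smul α))
    have hHint : Integrable (fun p : EuclideanSpace ℝ (Fin d) × EuclideanSpace ℝ (Fin d) =>
        (c ((1 - α) • (p.1 - p.2) + α • (T p.1 - T p.2))) ^ 2) π₀ := by
      refine Integrable.mono' (hint.const_mul ρ) hHcont.aestronglyMeasurable ?_
      filter_upwards with p
      rw [Real.norm_eq_abs, abs_of_nonneg (sq_nonneg _)]
      exact hkey p.1 p.2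
    have hmapfst : P.map Prod.fst = π₀ := by
      rw [Measure.map_fst_prod]; simp
    have hHfstint : Integrable (fun q : (EuclideanSpace ℝ (Fin d) × EuclideanSpace ℝ (Fin d)) × EuclideanSpace ℝ (Fin d) =>
        (c ((1 - α) • (q.1.1 - q.1.2) + α • (T q.1.1 - T q.1.2))) ^ 2) P := by
      have h2 := (integrable_map_measure
        (hmapfst ▸ hHcont.aestronglyMeasurable : AEStronglyMeasurable _ (P.map Prod.fst))
        measurable_fst.aemeasurable).mp (hmapfst ▸ hHint)
      exact h2
    have hGcost : (fun p : EuclideanSpace ℝ (Fin d) × EuclideanSpace ℝ (Fin d) => (c (p.1 - p.2)) ^ 2) ∘ (Gstep α T) =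
        fun q : (EuclideanSpace ℝ (Fin d) × EuclideanSpace ℝ (Fin d)) × EuclideanSpace ℝ (Fin d) =>
          (c ((1 - α) • (q.1.1 - q.1.2) + α • (T q.1.1 - T q.1.2))) ^ 2 := by
      funext q
      simp only [Function.comp, Gstep]
      rw [Fstep_diff]
    have hπ₁int : Integrable (fun p : EuclideanSpace ℝ (Fin d) × EuclideanSpace ℝ (Fin d) => (c (p.1 - p.2)) ^ 2) π₁ := by
      rw [hπ₁, integrable_map_measure hcostcont.aestronglyMeasurable hGmeas.aemeasurable,
        hGcost]
      exact hHfstint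
    refine ⟨∫ p, (c (p.1 - p.2)) ^ 2 ∂π₁, ⟨π₁, ⟨hm1, hm2⟩, hπ₁int, rfl⟩, ?_⟩
    have he1 : ∫ p, (c (p.1 - p.2)) ^ 2 ∂π₁ =
        ∫ q, (c ((1 - α) • (q.1.1 - q.1.2) + α • (T q.1.1 - T q.1.2))) ^ 2 ∂P := by
      rw [hπ₁, integral_map hGmeas.aemeasurable hcostcont.aestronglyMeasurable]
      exact congrArg (fun f => ∫ q, f q ∂P) hGcost
    have he2 : ∫ q, (c ((1 - α) • (q.1.1 - q.1.2) + α • (T q.1.1 - T q.1.2))) ^ 2 ∂P =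
        ∫ p, (c ((1 - α) • (p.1 - p.2) + α • (T p.1 - T p.2))) ^ 2 ∂π₀ := by
      conv_rhs => rw [← hmapfst]
      rw [integral_map measurable_fst.aemeasurable
        (hmapfst ▸ hHcont.aestronglyMeasurable : AEStronglyMeasurable _ (P.map Prod.fst))]
    rw [he1, he2]
    calc ∫ p, (c ((1 - α) • (p.1 - p.2) + α • (T p.1 - T p.2))) ^ 2 ∂π₀
        ≤ ∫ p, ρ * (c (p.1 - p.2)) ^ 2 ∂π₀ :=
          integral_mono hHint (hint.const_mul ρ) fun p => hkey p.1 p.2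
      _ = ρ * ∫ p, (c (p.1 - p.2)) ^ 2 ∂π₀ := integral_const_mul ρ _
  -- put it together
  rcases le_or_gt 0 ρ with hρ | hρ
  · have hS₀ne : {r : ℝ | ∃ π : Measure (EuclideanSpace ℝ (Fin d) × EuclideanSpace ℝ (Fin d)),
        IsCoupling π (Pr.map θ₀) (Pr.map θ₀') ∧
        Integrable (fun p => (c (p.1 - p.2)) ^ 2) π ∧
        r = ∫ p, (c (p.1 - p.2)) ^ 2 ∂π}.Nonempty :=
      ⟨_, hnat θ₀ θ₀' h₀meas h₀'meas h₀mom h₀'mom⟩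
    show sInf _ ≤ ρ * sInf _
    rcases hρ.lt_or_eq with hρpos | hρ0
    · have h1 : ∀ r ∈ {r : ℝ | ∃ π : Measure (EuclideanSpace ℝ (Fin d) × EuclideanSpace ℝ (Fin d)),
          IsCoupling π (Pr.map θ₀) (Pr.map θ₀') ∧
          Integrable (fun p => (c (p.1 - p.2)) ^ 2) π ∧
          r = ∫ p, (c (p.1 - p.2)) ^ 2 ∂π},
          W2sq c (Pr.map θ₁) (Pr.map θ₁') ≤ ρ * r := by
        intro r hr
        obtain ⟨r', hr', hle⟩ := hstep r hr
        exact (csInf_le (hbdd _ _) hr').trans hle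
      have h2 : W2sq c (Pr.map θ₁) (Pr.map θ₁') / ρ ≤
          sInf {r : ℝ | ∃ π : Measure (EuclideanSpace ℝ (Fin d) × EuclideanSpace ℝ (Fin d)),
          IsCoupling π (Pr.map θ₀) (Pr.map θ₀') ∧
          Integrable (fun p => (c (p.1 - p.2)) ^ 2) π ∧
          r = ∫ p, (c (p.1 - p.2)) ^ 2 ∂π} :=
        le_csInf hS₀ne fun r hr => (div_le_iff₀ hρpos).mpr
          (by rw [mul_comm]; exact h1 r hr)
      have h3 := (div_le_iff₀ hρpos).mp h2
      rw [mul_comm] at h3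
      exact h3
    · obtain ⟨r₀, hr₀⟩ := hS₀ne
      obtain ⟨r', hr', hle⟩ := hstep r₀ hr₀
      have h4 : W2sq c (Pr.map θ₁) (Pr.map θ₁') ≤ ρ * r₀ :=
        (csInf_le (hbdd _ _) hr').trans hle
      rw [← hρ0] at h4 ⊢
      simpa [W2sq] using h4
  · -- degenerate case: ρ < 0 forces c to vanish on all differences
    have hczero : ∀ x y : EuclideanSpace ℝ (Fin d), c (x - y) = 0 := by
      intro x y
      rcases (hc.nonneg (x - y)).eq_or_lt with h | h
      · exact h.symm
      · exfalso
        have := hkey x y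
        nlinarith [sq_nonneg (c ((1 - α) • (x - y) + α • (T x - T y))),
          mul_pos h h]
    have hcost0 : (fun p : EuclideanSpace ℝ (Fin d) × EuclideanSpace ℝ (Fin d) => (c (p.1 - p.2)) ^ 2) = fun _ => (0:ℝ) :=
      funext fun p => by rw [hczero p.1 p.2]; norm_num
    have hW0 : ∀ f g : Ω → EuclideanSpace ℝ (Fin d), Measurable f → Measurable g →
        Integrable (fun ω => ‖f ω‖ ^ 2) Pr → Integrable (fun ω => ‖g ω‖ ^ 2) Pr →
        W2sq c (Pr.map f) (Pr.map g) = 0 := by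
      intro f g hf hg hf2 hg2
      have hset : {r : ℝ | ∃ π : Measure (EuclideanSpace ℝ (Fin d) × EuclideanSpace ℝ (Fin d)),
          IsCoupling π (Pr.map f) (Pr.map g) ∧
          Integrable (fun p => (c (p.1 - p.2)) ^ 2) π ∧
          r = ∫ p, (c (p.1 - p.2)) ^ 2 ∂π} = {0} := by
        ext r
        simp only [Set.mem_setOf_eq, Set.mem_singleton_iff]
        constructor
        · rintro ⟨π, -, -, rfl⟩
          rw [hcost0]
          simp
        · rintro rfl
          have h5 := hnat f g hf hg hf2 hg2
          obtain ⟨π, hπ, hπint, hπeq⟩ := h5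
          refine ⟨π, hπ, hπint, ?_⟩
          rw [hcost0]
          simp
      show sInf _ = 0
      rw [hset]
      exact csInf_singleton 0
    have hwint1 : Integrable (fun ω => ‖θ₁ ω‖ ^ 2) Pr := by
      have h6 : ∀ ω, θ₁ ω = θ₀ ω := fun ω => by
        have h7 := hczero (θ₁ ω) (θ₀ ω)
        by_contra hne
        exact absurd h7 (ne_of_gt (hc.pos _ (sub_ne_zero_of_ne hne)))
      have h8 : (fun ω => ‖θ₁ ω‖ ^ 2) = fun ω => ‖θ₀ ω‖ ^ 2 := funext fun ω => by rw [h6 ω]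
      rw [h8]; exact h₀mom
    have hwint1' : Integrable (fun ω => ‖θ₁' ω‖ ^ 2) Pr := by
      have h6 : ∀ ω, θ₁' ω = θ₀' ω := fun ω => by
        have h7 := hczero (θ₁' ω) (θ₀' ω)
        by_contra hne
        exact absurd h7 (ne_of_gt (hc.pos _ (sub_ne_zero_of_ne hne)))
      have h8 : (fun ω => ‖θ₁' ω‖ ^ 2) = fun ω => ‖θ₀' ω‖ ^ 2 := funext fun ω => by rw [h6 ω]
      rw [h8]; exact h₀'mom
    rw [hW0 θ₁ θ₁' hθ₁meas hθ₁'meas hwint1 hwint1',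
      hW0 θ₀ θ₀' h₀meas h₀'meas h₀mom h₀'mom, mul_zero]
end
end
end

section
/- Consider the Q-learning model, and suppose at least one state s ∈ S has A*(s) ≠ A; let Δ = min over such states s of ( max_{a∈A} q*(s,a) − max_{a∉A*(s)} q*(s,a) ) > 0. Define g : ℝ^{S×A} → ℝ^S by g_s(x) = max_{a∈A*(s)} x(s,a) and h(x, y) = f(x + y) − f(y) − g(x) ∈ ℝ^S. Then for every ℝ^{S×A}-valued random vector Y with E[‖Y‖_∞⁴] < ∞ and every α > 0: E[ ‖h(Y, q*/√α)‖_∞² ] ≤ (16 α / Δ²) · E[ ‖Y‖_∞⁴ ]. -/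
open MeasureTheory ProbabilityTheory

noncomputable section

/-- The noise `(D, P, r)` of one step of generalized Q-learning: a random matrix over
state-action pairs, a random transition matrix, and a random reward vector. -/
abbrev QNoise (S A : Type) : Type :=
  (S × A → S × A → ℝ) × (S × A → S → ℝ) × (S × A → ℝ)

/-- `f_s(q) = max_a q(s,a)`. -/
noncomputable def fmax {S A : Type} [Nonempty A] (q : S × A → ℝ) (s : S) : ℝ :=
  ⨆ a : A, q (s, a)

/-- The sup-norm `‖x‖_∞` of a vector. -/
noncomputable def supNorm {ι : Type*} [Nonempty ι] (x : ι → ℝ) : ℝ := ⨆ i, |x i|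

/-- One Q-learning update `q ↦ q + α D (γ P f(q) - q + r)` with noise `w = (D, P, r)`. -/
noncomputable def qUpdate {S A : Type} [Fintype S] [Fintype A] [Nonempty A] (γ α : ℝ)
    (w : QNoise S A) (q : S × A → ℝ) : S × A → ℝ :=
  fun i => q i + α * (∑ j : S × A, w.1 i j *
    (γ * (∑ s : S, w.2.1 j s * fmax q s) - q j + w.2.2 j))

/-- The expected operator `H(q) = γ D P f(q) + (I - D) q + D r̄`. -/
noncomputable def Hop {S A : Type} [Fintype S] [Fintype A] [Nonempty A] (γ : ℝ)
    (Dbar : S × A → S × A → ℝ) (P : S × A → S → ℝ) (rbar : S × A → ℝ)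
    (q : S × A → ℝ) : S × A → ℝ :=
  fun i => γ * (∑ j : S × A, Dbar i j * (∑ s : S, P j s * fmax q s))
    + (q i - ∑ j : S × A, Dbar i j * q j) + ∑ j : S × A, Dbar i j * rbar j

/-- `g_s(x) = max_{a ∈ A*(s)} x(s,a)`, the max over the optimal actions of `qstar`. -/
noncomputable def gmax {S A : Type} [Nonempty A] (qstar : S × A → ℝ)
    (x : S × A → ℝ) (s : S) : ℝ :=
  ⨆ a : {a : A // qstar (s, a) = fmax qstar s}, x (s, a.1)

/-- The per-state error term `h(x, y) = f(x + y) - f(y) - g(x)`. -/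
noncomputable def hfun {S A : Type} [Nonempty A] (qstar : S × A → ℝ)
    (x y : S × A → ℝ) (s : S) : ℝ :=
  fmax (x + y) s - fmax y s - gmax qstar x s

private lemma bddR {ι : Type*} [Finite ι] (x : ι → ℝ) : BddAbove (Set.range x) :=
  Set.Finite.bddAbove (Set.finite_range x)

private lemma abs_le_supNorm {ι : Type*} [Fintype ι] [Nonempty ι] (x : ι → ℝ) (i : ι) :
    |x i| ≤ supNorm x := le_ciSup (f := fun j => |x j|) (bddR _) i

private lemma supNorm_nonneg' {ι : Type*} [Fintype ι] [Nonempty ι] (x : ι → ℝ) :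
    0 ≤ supNorm x := le_trans (abs_nonneg _) (abs_le_supNorm x (Classical.arbitrary ι))

private lemma supNorm_le' {ι : Type*} [Fintype ι] [Nonempty ι] {x : ι → ℝ} {B : ℝ}
    (h : ∀ i, |x i| ≤ B) : supNorm x ≤ B := ciSup_le h

private lemma le_fmax' {S A : Type} [Fintype A] [Nonempty A] (q : S × A → ℝ) (s : S) (a : A) :
    q (s, a) ≤ fmax q s := le_ciSup (f := fun b => q (s, b)) (bddR _) a

private lemma fmax_le' {S A : Type} [Fintype A] [Nonempty A] {q : S × A → ℝ} {s : S} {B : ℝ}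
    (h : ∀ a, q (s, a) ≤ B) : fmax q s ≤ B := ciSup_le h

private lemma exists_opt {S A : Type} [Fintype A] [Nonempty A] (qstar : S × A → ℝ) (s : S) :
    ∃ a : A, qstar (s, a) = fmax qstar s := by
  obtain ⟨a, ha⟩ := Finite.exists_max (fun a : A => qstar (s, a))
  exact ⟨a, le_antisymm (le_fmax' _ _ _) (fmax_le' ha)⟩

private lemma fmax_smul' {S A : Type} [Fintype A] [Nonempty A] (q : S × A → ℝ) (s : S)
    {c : ℝ} (hc : 0 ≤ c) : fmax (c • q) s = c * fmax q s := by
  simp only [fmax, Pi.smul_apply, smul_eq_mul, Real.mul_iSup_of_nonneg hc]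

private lemma delta_pos' {S A : Type} [Fintype S] [Fintype A] [Nonempty A] (qstar : S × A → ℝ)
    (hexists : ∃ s : S, ∃ a : A, qstar (s, a) < fmax qstar s) (Δ : ℝ)
    (hΔ : Δ = ⨅ s : {s : S // ∃ a : A, qstar (s, a) < fmax qstar s},
      (fmax qstar s.1 -
        ⨆ a : {a : A // qstar (s.1, a) < fmax qstar s.1}, qstar (s.1, a.1))) : 0 < Δ := by
  haveI hne : Nonempty {s : S // ∃ a : A, qstar (s, a) < fmax qstar s} :=
    nonempty_subtype.mpr hexists
  obtain ⟨s0, hs0⟩ := Finite.exists_min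
    (fun s : {s : S // ∃ a : A, qstar (s, a) < fmax qstar s} =>
      fmax qstar s.1 - ⨆ a : {a : A // qstar (s.1, a) < fmax qstar s.1}, qstar (s.1, a.1))
  rw [hΔ]
  refine lt_of_lt_of_le ?_ (le_ciInf hs0)
  haveI : Nonempty {a : A // qstar (s0.1, a) < fmax qstar s0.1} := nonempty_subtype.mpr s0.2
  obtain ⟨a1, ha1⟩ := Finite.exists_max
    (fun a : {a : A // qstar (s0.1, a) < fmax qstar s0.1} => qstar (s0.1, a.1))
  have h1 : (⨆ a : {a : A // qstar (s0.1, a) < fmax qstar s0.1}, qstar (s0.1, a.1))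
      ≤ qstar (s0.1, a1.1) := ciSup_le ha1
  have h2 := a1.2
  simp only [sub_pos]
  exact lt_of_le_of_lt h1 h2

private lemma key' {S A : Type} [Fintype S] [Fintype A] [Nonempty S] [Nonempty A]
    (qstar : S × A → ℝ) (Δ : ℝ)
    (hΔle : ∀ s a, qstar (s, a) < fmax qstar s → Δ ≤ fmax qstar s - qstar (s, a))
    (hΔpos : 0 < Δ) {α : ℝ} (hα : 0 < α) (x : S × A → ℝ) :
    supNorm (hfun qstar x ((Real.sqrt α)⁻¹ • qstar)) ^ 2 ≤ (16 * α / Δ ^ 2) * supNorm x ^ 4 := by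
  have hsq : 0 < Real.sqrt α := Real.sqrt_pos.mpr hα
  set c : ℝ := (Real.sqrt α)⁻¹ with hcdef
  have hc : 0 < c := inv_pos.mpr hsq
  set y : S × A → ℝ := c • qstar with hy
  set M : ℝ := supNorm x with hM
  have hM0 : 0 ≤ M := supNorm_nonneg' x
  have hxM : ∀ i : S × A, |x i| ≤ M := abs_le_supNorm x
  have hyopt : ∀ s (a : A), qstar (s, a) = fmax qstar s → y (s, a) = fmax y s := by
    intro s a ha
    rw [hy, fmax_smul' qstar s hc.le]
    simp [ha]
  -- optimal set nonempty
  haveI hoptne : ∀ s : S, Nonempty {a : A // qstar (s, a) = fmax qstar s} := fun s =>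
    nonempty_subtype.mpr (exists_opt qstar s)
  have hgmax_le : ∀ s, gmax qstar x s ≤ M := fun s =>
    ciSup_le fun a => (abs_le.mp (hxM (s, a.1))).2
  have hgmax_ge : ∀ s, -M ≤ gmax qstar x s := by
    intro s
    obtain ⟨a0⟩ := hoptne s
    calc -M ≤ x (s, a0.1) := (abs_le.mp (hxM (s, a0.1))).1
    _ ≤ gmax qstar x s :=
      le_ciSup (f := fun a : {a : A // qstar (s, a) = fmax qstar s} => x (s, a.1)) (bddR _) a0
  have h_nonneg : ∀ s, 0 ≤ hfun qstar x y s := by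
    intro s
    have : gmax qstar x s ≤ fmax (x + y) s - fmax y s := by
      refine ciSup_le fun a => ?_
      have h1 : x (s, a.1) + y (s, a.1) ≤ fmax (x + y) s := le_fmax' (x + y) s a.1
      have h2 : y (s, a.1) = fmax y s := hyopt s a.1 a.2
      linarith
    simp only [hfun]
    linarith
  -- generic bound hfun ≤ 2M
  have h_le2M : ∀ s, hfun qstar x y s ≤ 2 * M := by
    intro s
    have h1 : fmax (x + y) s ≤ fmax y s + M := by
      refine fmax_le' fun a => ?_
      have := (abs_le.mp (hxM (s, a))).2
      have h2 : y (s, a) ≤ fmax y s := le_fmax' y s a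
      simp only [Pi.add_apply]
      linarith
    have h2 := hgmax_ge s
    simp only [hfun]
    linarith
  set B : ℝ := 4 * Real.sqrt α * M ^ 2 / Δ with hB
  have hB0 : 0 ≤ B := div_nonneg (by positivity) hΔpos.le
  have habs : ∀ s, |hfun qstar x y s| ≤ B := by
    intro s
    rw [abs_of_nonneg (h_nonneg s)]
    by_cases hcase : 2 * M ≤ c * Δ
    · -- hfun s ≤ 0 ≤ B
      have hle0 : fmax (x + y) s ≤ fmax y s + gmax qstar x s := by
        refine fmax_le' fun a => ?_
        simp only [Pi.add_apply]
        by_cases hopt : qstar (s, a) = fmax qstar s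
        · have h1 : x (s, a) ≤ gmax qstar x s :=
            le_ciSup (f := fun b : {b : A // qstar (s, b) = fmax qstar s} => x (s, b.1))
              (bddR _) ⟨a, hopt⟩
          have h2 : y (s, a) = fmax y s := hyopt s a hopt
          linarith
        · have hlt : qstar (s, a) < fmax qstar s :=
            lt_of_le_of_ne (le_fmax' qstar s a) hopt
          have h1 : Δ ≤ fmax qstar s - qstar (s, a) := hΔle s a hlt
          have h2 : y (s, a) ≤ fmax y s - c * Δ := by
            have : y (s, a) = c * qstar (s, a) := rfl
            rw [this, hy, fmax_smul' qstar s hc.le]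
            nlinarith
          have h3 := (abs_le.mp (hxM (s, a))).2
          have h4 := hgmax_ge s
          linarith
      have : hfun qstar x y s ≤ 0 := by simp only [hfun]; linarith
      linarith
    · -- c * Δ < 2 M, so 2 M ≤ B
      push_neg at hcase
      have hMpos : 0 < M := by nlinarith
      have hΔlt : Δ < 2 * M * Real.sqrt α := by
        have h1 : c * Δ * Real.sqrt α < 2 * M * Real.sqrt α :=
          mul_lt_mul_of_pos_right hcase hsq
        have h2 : c * Real.sqrt α = 1 := inv_mul_cancel₀ hsq.ne'
        nlinarith
      have h2MB : 2 * M ≤ B := by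
        rw [hB, le_div_iff₀ hΔpos]
        nlinarith
      exact le_trans (h_le2M s) h2MB
  have hsup : supNorm (hfun qstar x y) ≤ B := supNorm_le' habs
  have hsup0 : 0 ≤ supNorm (hfun qstar x y) := supNorm_nonneg' _
  have hsq2 : supNorm (hfun qstar x y) ^ 2 ≤ B ^ 2 := by nlinarith
  have hB2 : B ^ 2 = 16 * α / Δ ^ 2 * M ^ 4 := by
    rw [hB, div_pow, mul_pow, mul_pow, Real.sq_sqrt hα.le]
    ring
  calc supNorm (hfun qstar x y) ^ 2 ≤ B ^ 2 := hsq2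
  _ = 16 * α / Δ ^ 2 * M ^ 4 := hB2

theorem stmt_16 {S A : Type} [Fintype S] [Fintype A] [Nonempty S] [Nonempty A]
    (qstar : S × A → ℝ)
    -- at least one state has a non-optimal action
    (hexists : ∃ s : S, ∃ a : A, qstar (s, a) < fmax qstar s)
    -- Δ is the minimal optimality gap over such states
    (Δ : ℝ)
    (hΔ : Δ = ⨅ s : {s : S // ∃ a : A, qstar (s, a) < fmax qstar s},
      (fmax qstar s.1 -
        ⨆ a : {a : A // qstar (s.1, a) < fmax qstar s.1}, qstar (s.1, a.1)))
    {Ω : Type*} [MeasurableSpace Ω] (Pr : Measure Ω) [IsProbabilityMeasure Pr]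
    (Y : Ω → S × A → ℝ) (hYmeas : Measurable Y)
    (hY4 : Integrable (fun ω => supNorm (Y ω) ^ 4) Pr)
    (α : ℝ) (hα : 0 < α) :
    0 < Δ ∧
    ∫ ω, supNorm (hfun qstar (Y ω) ((Real.sqrt α)⁻¹ • qstar)) ^ 2 ∂Pr ≤
      (16 * α / Δ ^ 2) * ∫ ω, supNorm (Y ω) ^ 4 ∂Pr := by
  have hΔpos : 0 < Δ := delta_pos' qstar hexists Δ hΔ
  have hΔle : ∀ s a, qstar (s, a) < fmax qstar s → Δ ≤ fmax qstar s - qstar (s, a) := by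
    intro s a h
    haveI : Nonempty {a' : A // qstar (s, a') < fmax qstar s} := ⟨⟨a, h⟩⟩
    have h1 : Δ ≤ fmax qstar s -
        ⨆ a' : {a' : A // qstar (s, a') < fmax qstar s}, qstar (s, a'.1) := by
      rw [hΔ]
      exact ciInf_le (Set.Finite.bddBelow (Set.finite_range _))
        (⟨s, ⟨a, h⟩⟩ : {s : S // ∃ a : A, qstar (s, a) < fmax qstar s})
    have h2 : qstar (s, a) ≤
        ⨆ a' : {a' : A // qstar (s, a') < fmax qstar s}, qstar (s, a'.1) :=
      le_ciSup (f := fun a' : {a' : A // qstar (s, a') < fmax qstar s} => qstar (s, a'.1))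
        (bddR _) ⟨a, h⟩
    linarith
  refine ⟨hΔpos, ?_⟩
  have hint : Integrable (fun ω => 16 * α / Δ ^ 2 * supNorm (Y ω) ^ 4) Pr := hY4.const_mul _
  rw [← integral_const_mul]
  exact integral_mono_of_nonneg (Filter.Eventually.of_forall fun ω => sq_nonneg _) hint
    (Filter.Eventually.of_forall fun ω => key' qstar Δ hΔle hΔpos hα (Y ω))
end
end

section
/- Let (θ_t)_{t≥0} be ℝ^d-valued random vectors, let ‖·‖_c be a norm on ℝ^d with l_cs‖x‖₂ ≤ ‖x‖_c for all x, and suppose there are constants τ ≥ 1, C₀ > 0, C₁ > 0, a stepsize α > 0 with 0 < 1 − αC₁ < 1, and a probability measure μ on ℝ^d with finite second moment such that W₂²(law(θ_t), μ) ≤ C₀(1 − αC₁)^t for all t ≥ τ, where W₂ is taken with respect to ‖·‖_c. Let θ̄_{k₀,k} = (1/(k−k₀)) Σ_{t=k₀}^{k−1} θ_t be the tail-averaged iterate. Then for all integers k₀ ≥ τ and k ≥ k₀ + 1: ‖ E[θ̄_{k₀,k}] − ∫x dμ(x) ‖₂ ≤ (2√C₀ / (l_cs C₁)) · (1/(α(k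 − k₀))) · exp(−α C₁ k₀ / 2). In particular, if moreover ∫x dμ(x) = θ* + α^β B + r(α) for some θ*, B ∈ ℝ^d and β > 0, then ‖ E[θ̄_{k₀,k}] − θ* − α^β B ‖₂ ≤ ‖r(α)‖₂ + (2√C₀ / (l_cs C₁)) · (1/(α(k − k₀))) · exp(−α C₁ k₀ / 2). -/
open MeasureTheory ProbabilityTheory

noncomputable section

set_option maxHeartbeats 1000000 in
theorem stmt_17 {d : ℕ}
    {Ω : Type*} [MeasurableSpace Ω] (Pr : Measure Ω) [IsProbabilityMeasure Pr]
    (θ : ℕ → Ω → EuclideanSpace ℝ (Fin d))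
    (hmeas : ∀ t, Measurable (θ t)) (hint : ∀ t, Integrable (θ t) Pr)
    (c : EuclideanSpace ℝ (Fin d) → ℝ) (hc : IsNormLike c)
    (lcs : ℝ) (hlcs : 0 < lcs) (hlow : ∀ x, lcs * ‖x‖ ≤ c x)
    (τ : ℕ) (hτ : 1 ≤ τ) (C₀ C₁ α : ℝ) (hC₀ : 0 < C₀) (hC₁ : 0 < C₁) (hα : 0 < α)
    (hαC : α * C₁ < 1)
    (μ : Measure (EuclideanSpace ℝ (Fin d))) [IsProbabilityMeasure μ]
    (hμ1 : Integrable (fun x : EuclideanSpace ℝ (Fin d) => x) μ)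
    (hμ2 : Integrable (fun x : EuclideanSpace ℝ (Fin d) => ‖x‖ ^ 2) μ)
    -- W₂²(law(θ_t), μ) ≤ C₀ (1 - α C₁)^t for t ≥ τ, witnessed by couplings
    (hW : ∀ t ≥ τ, ∃ π : Measure (EuclideanSpace ℝ (Fin d) × EuclideanSpace ℝ (Fin d)),
      IsCoupling π (Measure.map (θ t) Pr) μ ∧
      Integrable (fun p => (c (p.1 - p.2)) ^ 2) π ∧
      ∫ p, (c (p.1 - p.2)) ^ 2 ∂π ≤ C₀ * (1 - α * C₁) ^ t)
    (θstar B rr : EuclideanSpace ℝ (Fin d)) (β : ℝ) (hβ : 0 < β)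
    (hmean : ∫ x, x ∂μ = θstar + (α ^ β) • B + rr) :
    ∀ k₀ ≥ τ, ∀ k ≥ k₀ + 1,
      ‖(∫ ω, (((k : ℝ) - (k₀ : ℝ))⁻¹ • ∑ t ∈ Finset.Ico k₀ k, θ t ω) ∂Pr) - ∫ x, x ∂μ‖ ≤
        (2 * Real.sqrt C₀ / (lcs * C₁)) * (1 / (α * ((k : ℝ) - (k₀ : ℝ)))) *
          Real.exp (-(α * C₁ * (k₀ : ℝ)) / 2) ∧
      ‖(∫ ω, (((k : ℝ) - (k₀ : ℝ))⁻¹ • ∑ t ∈ Finset.Ico k₀ k, θ t ω) ∂Pr)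
          - θstar - (α ^ β) • B‖ ≤
        ‖rr‖ + (2 * Real.sqrt C₀ / (lcs * C₁)) * (1 / (α * ((k : ℝ) - (k₀ : ℝ)))) *
          Real.exp (-(α * C₁ * (k₀ : ℝ)) / 2) := by
  -- basic facts about c
  have c0 : c 0 = 0 := by
    have := hc.smul_eq 0 0
    simpa using this
  have cnonneg : ∀ x, 0 ≤ c x := by
    intro x
    rcases eq_or_ne x 0 with h | h
    · simp [h, c0]
    · exact (hc.pos x h).le
  set q : ℝ := 1 - α * C₁ with hq_def
  have hq0 : 0 < q := by simp only [hq_def]; linarith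
  have hq1 : q < 1 := by simp only [hq_def]; nlinarith
  set s : ℝ := Real.sqrt q with hs_def
  have hs0 : 0 ≤ s := Real.sqrt_nonneg _
  have hs_sq : s ^ 2 = q := Real.sq_sqrt hq0.le
  have hs1 : s < 1 := by
    rw [hs_def, show (1:ℝ) = Real.sqrt 1 by simp]
    exact Real.sqrt_lt_sqrt hq0.le hq1
  set m : EuclideanSpace ℝ (Fin d) := ∫ x, x ∂μ with hm_def
  -- the key per-iterate bound
  have key : ∀ t, τ ≤ t → ‖(∫ ω, θ t ω ∂Pr) - m‖ ≤ (Real.sqrt C₀ / lcs) * s ^ t := by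
    intro t ht
    obtain ⟨π, ⟨hfst, hsnd⟩, hci, hcb⟩ := hW t ht
    haveI : IsProbabilityMeasure (Measure.map (θ t) Pr) :=
      Measure.isProbabilityMeasure_map (hmeas t).aemeasurable
    haveI hπP : IsProbabilityMeasure π := by
      constructor
      have : π.map Prod.fst Set.univ = 1 := by rw [hfst]; exact measure_univ
      rwa [Measure.map_apply measurable_fst MeasurableSet.univ, Set.preimage_univ] at this
    have c_asm : AEStronglyMeasurable (fun p : EuclideanSpace ℝ (Fin d) × EuclideanSpace ℝ (Fin d)
        => c (p.1 - p.2)) π := by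
      have h1 := hci.aestronglyMeasurable
      have h2 : AEStronglyMeasurable (fun p : EuclideanSpace ℝ (Fin d) × EuclideanSpace ℝ (Fin d)
          => Real.sqrt ((c (p.1 - p.2)) ^ 2)) π :=
        Real.continuous_sqrt.comp_aestronglyMeasurable h1
      simpa only [Real.sqrt_sq (cnonneg _)] using h2
    have c_int : Integrable (fun p : EuclideanSpace ℝ (Fin d) × EuclideanSpace ℝ (Fin d)
        => c (p.1 - p.2)) π := by
      refine Integrable.mono' ((integrable_const 1).add hci) c_asm ?_
      filter_upwards with p
      have h1 := cnonneg (p.1 - p.2)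
      rw [Real.norm_of_nonneg h1]
      simp only [Pi.add_apply]
      nlinarith [sq_nonneg (c (p.1 - p.2) - 1)]
    -- integrability of the coordinates
    have int1 : Integrable (fun p : EuclideanSpace ℝ (Fin d) × EuclideanSpace ℝ (Fin d)
        => p.1) π := by
      have h1 : Integrable (fun x : EuclideanSpace ℝ (Fin d) => x) (Measure.map (θ t) Pr) :=
        (integrable_map_measure aestronglyMeasurable_id (hmeas t).aemeasurable).mpr (hint t)
      rw [← hfst] at h1
      exact (integrable_map_measure aestronglyMeasurable_id
        measurable_fst.aemeasurable).mp h1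
    have int2 : Integrable (fun p : EuclideanSpace ℝ (Fin d) × EuclideanSpace ℝ (Fin d)
        => p.2) π := by
      have h1 : Integrable (fun x : EuclideanSpace ℝ (Fin d) => x) μ := hμ1
      rw [← hsnd] at h1
      exact (integrable_map_measure aestronglyMeasurable_id
        measurable_snd.aemeasurable).mp h1
    have eq1 : ∫ ω, θ t ω ∂Pr = ∫ p, p.1 ∂π := by
      have h1 : ∫ p, p.1 ∂π = ∫ x, x ∂(π.map Prod.fst) :=
        (integral_map measurable_fst.aemeasurable aestronglyMeasurable_id).symm
      rw [h1, hfst]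
      exact (integral_map (hmeas t).aemeasurable aestronglyMeasurable_id).symm
    have eq2 : m = ∫ p, p.2 ∂π := by
      have h1 : ∫ p, p.2 ∂π = ∫ x, x ∂(π.map Prod.snd) :=
        (integral_map measurable_snd.aemeasurable aestronglyMeasurable_id).symm
      rw [h1, hsnd, hm_def]
    have eq3 : (∫ ω, θ t ω ∂Pr) - m = ∫ p, (p.1 - p.2) ∂π := by
      rw [eq1, eq2, ← integral_sub int1 int2]
    -- Cauchy-Schwarz via variance
    have hmem : MemLp (fun p : EuclideanSpace ℝ (Fin d) × EuclideanSpace ℝ (Fin d)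
        => c (p.1 - p.2)) 2 π := (memLp_two_iff_integrable_sq c_asm).mpr hci
    have hvar := variance_nonneg (fun p : EuclideanSpace ℝ (Fin d) × EuclideanSpace ℝ (Fin d)
        => c (p.1 - p.2)) π
    rw [variance_eq_sub hmem] at hvar
    have hCS : (∫ p, c (p.1 - p.2) ∂π) ^ 2 ≤ ∫ p, (c (p.1 - p.2)) ^ 2 ∂π := by
      have h1 : ((fun p : EuclideanSpace ℝ (Fin d) × EuclideanSpace ℝ (Fin d)
          => c (p.1 - p.2)) ^ 2) = fun p => (c (p.1 - p.2)) ^ 2 := by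
        funext p; simp [Pi.pow_apply]
      rw [h1] at hvar
      linarith
    have hcint_nonneg : 0 ≤ ∫ p, c (p.1 - p.2) ∂π := integral_nonneg fun p => cnonneg _
    have hsq_nonneg : 0 ≤ C₀ * q ^ t := by positivity
    have hcle : ∫ p, c (p.1 - p.2) ∂π ≤ Real.sqrt (C₀ * q ^ t) := by
      rw [Real.le_sqrt hcint_nonneg hsq_nonneg]
      exact le_trans hCS hcb
    have hsqrt_eq : Real.sqrt (C₀ * q ^ t) = Real.sqrt C₀ * s ^ t := by
      rw [Real.sqrt_mul hC₀.le]
      congr 1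
      have : q ^ t = (s ^ t) ^ 2 := by rw [← pow_mul, mul_comm t 2, pow_mul, hs_sq]
      rw [this, Real.sqrt_sq (pow_nonneg hs0 t)]
    rw [eq3]
    calc ‖∫ p, (p.1 - p.2) ∂π‖ ≤ ∫ p, ‖p.1 - p.2‖ ∂π := norm_integral_le_integral_norm _
      _ ≤ ∫ p, lcs⁻¹ * c (p.1 - p.2) ∂π := by
          refine integral_mono_of_nonneg (Filter.Eventually.of_forall fun p => norm_nonneg _)
            (c_int.const_mul _) (Filter.Eventually.of_forall fun p => ?_)
          show ‖p.1 - p.2‖ ≤ lcs⁻¹ * c (p.1 - p.2)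
          rw [inv_mul_eq_div, le_div_iff₀ hlcs, mul_comm]
          exact hlow _
      _ = lcs⁻¹ * ∫ p, c (p.1 - p.2) ∂π := integral_const_mul _ _
      _ ≤ lcs⁻¹ * Real.sqrt (C₀ * q ^ t) := by
          exact mul_le_mul_of_nonneg_left hcle (inv_nonneg.mpr hlcs.le)
      _ = (Real.sqrt C₀ / lcs) * s ^ t := by rw [hsqrt_eq]; ring
  -- now the averaging
  intro k₀ hk₀ k hk
  have hkk : k₀ < k := by omega
  have hcast : ((k - k₀ : ℕ) : ℝ) = (k : ℝ) - (k₀ : ℝ) := by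
    push_cast [Nat.cast_sub hkk.le]; ring
  have hn_pos : (0:ℝ) < (k : ℝ) - (k₀ : ℝ) := by
    rw [← hcast]; exact_mod_cast Nat.sub_pos_of_lt hkk
  -- exchange integral and sum
  have hA : (∫ ω, (((k : ℝ) - (k₀ : ℝ))⁻¹ • ∑ t ∈ Finset.Ico k₀ k, θ t ω) ∂Pr)
      = ((k : ℝ) - (k₀ : ℝ))⁻¹ • ∑ t ∈ Finset.Ico k₀ k, ∫ ω, θ t ω ∂Pr := by
    rw [integral_smul, integral_finset_sum _ (fun t _ => hint t)]
  set A : EuclideanSpace ℝ (Fin d) :=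
    ∫ ω, (((k : ℝ) - (k₀ : ℝ))⁻¹ • ∑ t ∈ Finset.Ico k₀ k, θ t ω) ∂Pr with hA_def
  have hAm : A - m = ((k : ℝ) - (k₀ : ℝ))⁻¹ •
      ∑ t ∈ Finset.Ico k₀ k, ((∫ ω, θ t ω ∂Pr) - m) := by
    rw [hA, Finset.sum_sub_distrib, Finset.sum_const, Nat.card_Ico, smul_sub]
    congr 1
    rw [← Nat.cast_smul_eq_nsmul ℝ, smul_smul, hcast, inv_mul_cancel₀ hn_pos.ne', one_smul]
  -- sum of geometric bounds
  have hsum : ∑ t ∈ Finset.Ico k₀ k, (Real.sqrt C₀ / lcs) * s ^ t ≤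
      (Real.sqrt C₀ / lcs) * (s ^ k₀ * (1 / (1 - s))) := by
    rw [← Finset.mul_sum]
    refine mul_le_mul_of_nonneg_left ?_ (by positivity)
    rw [Finset.sum_Ico_eq_sum_range]
    simp_rw [pow_add, ← Finset.mul_sum]
    refine mul_le_mul_of_nonneg_left ?_ (pow_nonneg hs0 _)
    rw [geom_sum_eq hs1.ne (k - k₀)]
    have h1s : (0:ℝ) < 1 - s := by linarith
    have hnum : (s ^ (k - k₀) - 1) / (s - 1) = (1 - s ^ (k - k₀)) / (1 - s) := by
      rw [div_eq_div_iff (by linarith : s - 1 ≠ 0) (by linarith : (1:ℝ) - s ≠ 0)]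
      ring
    rw [hnum, div_le_div_iff₀ h1s h1s]
    nlinarith [pow_nonneg hs0 (k - k₀)]
  have hnorm_bound : ‖A - m‖ ≤ ((k : ℝ) - (k₀ : ℝ))⁻¹ *
      ((Real.sqrt C₀ / lcs) * (s ^ k₀ * (1 / (1 - s)))) := by
    rw [hAm, norm_smul, Real.norm_eq_abs, abs_of_pos (inv_pos.mpr hn_pos)]
    refine mul_le_mul_of_nonneg_left ?_ (inv_pos.mpr hn_pos).le
    calc ‖∑ t ∈ Finset.Ico k₀ k, ((∫ ω, θ t ω ∂Pr) - m)‖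
        ≤ ∑ t ∈ Finset.Ico k₀ k, ‖(∫ ω, θ t ω ∂Pr) - m‖ := norm_sum_le _ _
      _ ≤ ∑ t ∈ Finset.Ico k₀ k, (Real.sqrt C₀ / lcs) * s ^ t := by
          refine Finset.sum_le_sum fun t ht => key t ?_
          exact le_trans hk₀ (Finset.mem_Ico.mp ht).1
      _ ≤ (Real.sqrt C₀ / lcs) * (s ^ k₀ * (1 / (1 - s))) := hsum
  -- bound s ^ k₀ by the exponential
  have hs_exp : s ≤ Real.exp (-(α * C₁) / 2) := by
    have h1 : q ≤ Real.exp (-(α * C₁)) := by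
      have := Real.add_one_le_exp (-(α * C₁))
      simp only [hq_def]; linarith
    have h2 : Real.sqrt (Real.exp (-(α * C₁))) = Real.exp (-(α * C₁) / 2) := by
      rw [show Real.exp (-(α * C₁)) = (Real.exp (-(α * C₁) / 2)) ^ 2 by
        rw [← Real.exp_nat_mul]; congr 1; push_cast; ring, Real.sqrt_sq (Real.exp_nonneg _)]
    rw [hs_def, ← h2]
    exact Real.sqrt_le_sqrt h1
  have hpow_exp : s ^ k₀ ≤ Real.exp (-(α * C₁ * (k₀ : ℝ)) / 2) := by
    calc s ^ k₀ ≤ (Real.exp (-(α * C₁) / 2)) ^ k₀ := pow_le_pow_left₀ hs0 hs_exp k₀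
      _ = Real.exp (-(α * C₁ * (k₀ : ℝ)) / 2) := by
          rw [← Real.exp_nat_mul]; congr 1; ring
  -- bound 1/(1-s) by 2/(α C₁)
  have h1s : α * C₁ / 2 ≤ 1 - s := by
    have h1 : s ≤ (1 + q) / 2 := by
      have hexp : s ^ 2 - 2 * s + 1 = (s - 1) ^ 2 := by ring
      have h2 : (0:ℝ) ≤ s ^ 2 - 2 * s + 1 := hexp ▸ sq_nonneg _
      linarith [hs_sq, h2]
    simp only [hq_def] at h1; linarith
  have h1s_pos : (0:ℝ) < 1 - s := by linarith [mul_pos hα hC₁]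
  have hinv : 1 / (1 - s) ≤ 2 / (α * C₁) := by
    rw [div_le_div_iff₀ h1s_pos (by positivity)]
    linarith
  -- combine everything
  have hfirst : ‖A - m‖ ≤ (2 * Real.sqrt C₀ / (lcs * C₁)) *
      (1 / (α * ((k : ℝ) - (k₀ : ℝ)))) * Real.exp (-(α * C₁ * (k₀ : ℝ)) / 2) := by
    refine le_trans hnorm_bound ?_
    have h1 : ((k : ℝ) - (k₀ : ℝ))⁻¹ * ((Real.sqrt C₀ / lcs) * (s ^ k₀ * (1 / (1 - s)))) ≤
        ((k : ℝ) - (k₀ : ℝ))⁻¹ * ((Real.sqrt C₀ / lcs) *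
          (Real.exp (-(α * C₁ * (k₀ : ℝ)) / 2) * (2 / (α * C₁)))) := by
      have hin : s ^ k₀ * (1 / (1 - s)) ≤
          Real.exp (-(α * C₁ * (k₀ : ℝ)) / 2) * (2 / (α * C₁)) :=
        mul_le_mul hpow_exp hinv (by positivity) (Real.exp_nonneg _)
      refine mul_le_mul_of_nonneg_left (mul_le_mul_of_nonneg_left hin (by positivity)) ?_
      exact (inv_pos.mpr hn_pos).le
    refine le_trans h1 (le_of_eq ?_)
    field_simp
  refine ⟨hfirst, ?_⟩
  have heq : A - θstar - (α ^ β) • B = (A - m) + rr := by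
    rw [hmean]; abel
  calc ‖A - θstar - (α ^ β) • B‖ = ‖(A - m) + rr‖ := by rw [heq]
    _ ≤ ‖A - m‖ + ‖rr‖ := norm_add_le _ _
    _ ≤ (2 * Real.sqrt C₀ / (lcs * C₁)) * (1 / (α * ((k : ℝ) - (k₀ : ℝ)))) *
          Real.exp (-(α * C₁ * (k₀ : ℝ)) / 2) + ‖rr‖ := by linarith [hfirst]
    _ = ‖rr‖ + (2 * Real.sqrt C₀ / (lcs * C₁)) * (1 / (α * ((k : ℝ) - (k₀ : ℝ)))) *
          Real.exp (-(α * C₁ * (k₀ : ℝ)) / 2) := by ring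
end
end

section
/- Let α > 0 and β > 0, and for each stepsize s ∈ {α, 2α} let (θ_t^{(s)})_{t≥0} be ℝ^d-valued random vectors such that there are constants τ ≥ 1, C₀ > 0, C₁ > 0 with 0 < 1 − 2αC₁ < 1 and a probability measure μ_s on ℝ^d with finite second moment satisfying W₂²(law(θ_t^{(s)}), μ_s) ≤ C₀(1 − sC₁)^t for all t ≥ τ (W₂ with respect to a norm ‖·‖_c with l_cs‖x‖₂ ≤ ‖x‖_c), and ∫x dμ_s(x) = θ* + s^β B + r(s) for some θ*, B ∈ ℝ^d and vectors r(s) ∈ ℝ^d. Define the tail averages θ̄^{(s)}_{k₀,k} = (1/(k−k₀)) Σ_{t=k₀}^{k−1} θ_t^{(s)} and the Richardson–Romberg extrapolated iterate θ̃_{k₀,k} = (2^β/(2^β − 1)) θ̄^{(α)}_{k₀,k} − (1/(2^β − 1)) θ̄^{(2α)}_{k₀,k}. Then there is a constant C depending only on C₀, C₁, l_cs and β such that for all integers k₀ ≥ τ and k ≥ k₀ + 1: ‖ E[θ̃_{k₀,k}] − θ* ‖₂ ≤ (2^β ‖r(α)‖₂ + ‖r(2α)‖₂)/(2^β − 1)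 + (C/(α(k − k₀))) · exp(−α C₁ k₀ / 2); in particular the leading bias terms α^β B and (2α)^β B cancel exactly. -/
open MeasureTheory ProbabilityTheory

noncomputable section

lemma sqrt_pow_aux (x : ℝ) (hx : 0 ≤ x) (n : ℕ) :
    Real.sqrt (x ^ n) = (Real.sqrt x) ^ n := by
  rw [show x ^ n = ((Real.sqrt x) ^ n) ^ 2 by
      rw [← pow_mul, mul_comm, pow_mul, Real.sq_sqrt hx],
    Real.sqrt_sq (pow_nonneg (Real.sqrt_nonneg x) n)]

lemma jensen_sqrt {X : Type*} [MeasurableSpace X] (π : Measure X)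
    [IsProbabilityMeasure π] (f : X → ℝ) (hf : ∀ x, 0 ≤ f x)
    (hm : AEStronglyMeasurable f π) (h2 : Integrable (fun x => f x ^ 2) π) :
    ∫ x, f x ∂π ≤ Real.sqrt (∫ x, f x ^ 2 ∂π) := by
  have hmem : MemLp f 2 π := (memLp_two_iff_integrable_sq hm).2 h2
  have hvar := variance_nonneg f π
  rw [variance_eq_sub hmem] at hvar
  have h1 : (∫ x, f x ∂π) ^ 2 ≤ ∫ x, f x ^ 2 ∂π := by
    have he : π[f ^ 2] = ∫ x, f x ^ 2 ∂π := by simp [Pi.pow_apply]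
    rw [he] at hvar; linarith
  exact (Real.le_sqrt (integral_nonneg hf) (le_trans (sq_nonneg _) h1)).2 h1

lemma coupling_mean_dist {d : ℕ} {lcs : ℝ} (hlcs : 0 < lcs)
    (c : EuclideanSpace ℝ (Fin d) → ℝ)
    (hcl : ∀ x, lcs * ‖x‖ ≤ c x)
    (ν μ : Measure (EuclideanSpace ℝ (Fin d))) [IsProbabilityMeasure ν] [IsProbabilityMeasure μ]
    (hν : Integrable (fun x => x) ν) (hμ : Integrable (fun x => x) μ)
    (π : Measure (EuclideanSpace ℝ (Fin d) × EuclideanSpace ℝ (Fin d))) (hπ : IsCoupling π ν μ)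
    (hint : Integrable (fun p => (c (p.1 - p.2)) ^ 2) π) :
    ‖(∫ x, x ∂ν) - ∫ x, x ∂μ‖ ≤ Real.sqrt (∫ p, (c (p.1 - p.2)) ^ 2 ∂π) / lcs := by
  set f : (EuclideanSpace ℝ (Fin d) × EuclideanSpace ℝ (Fin d)) → ℝ :=
    fun p => c (p.1 - p.2) with hfdef
  have hc0 : ∀ x, 0 ≤ c x := fun x =>
    le_trans (mul_nonneg hlcs.le (norm_nonneg x)) (hcl x)
  haveI : IsProbabilityMeasure π := by
    constructor
    have h1 : (π.map Prod.fst) Set.univ = 1 := by rw [hπ.1]; simp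
    rwa [Measure.map_apply measurable_fst MeasurableSet.univ, Set.preimage_univ] at h1
  have hm : AEStronglyMeasurable f π := by
    have h := hint.aestronglyMeasurable
    have h2 : AEStronglyMeasurable (fun p => Real.sqrt (f p ^ 2)) π :=
      Real.continuous_sqrt.comp_aestronglyMeasurable h
    convert h2 using 2 with p
    rw [Real.sqrt_sq (hc0 _)]
  have hf_int : Integrable f π := by
    refine ((integrable_const (1:ℝ)).add hint).mono' hm (Filter.Eventually.of_forall fun p => ?_)
    simp only [Real.norm_eq_abs, abs_of_nonneg (hc0 _), Pi.add_apply]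
    have h0 := hc0 (p.1 - p.2)
    rw [show f p = c (p.1 - p.2) from rfl, abs_of_nonneg h0]
    nlinarith [sq_nonneg (c (p.1 - p.2) - 1)]
  have h1 : Integrable (fun p : EuclideanSpace ℝ (Fin d) × EuclideanSpace ℝ (Fin d) => p.1) π := by
    have := hν
    rw [← hπ.1] at this
    exact (integrable_map_measure (g := fun x : EuclideanSpace ℝ (Fin d) => x)
      aestronglyMeasurable_id measurable_fst.aemeasurable).mp this
  have h2 : Integrable (fun p : EuclideanSpace ℝ (Fin d) × EuclideanSpace ℝ (Fin d) => p.2) π := by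
    have := hμ
    rw [← hπ.2] at this
    exact (integrable_map_measure (g := fun x : EuclideanSpace ℝ (Fin d) => x)
      aestronglyMeasurable_id measurable_snd.aemeasurable).mp this
  have hν_eq : (∫ x, x ∂ν) = ∫ p, p.1 ∂π := by
    rw [← hπ.1]
    exact integral_map (f := fun x : EuclideanSpace ℝ (Fin d) => x)
      measurable_fst.aemeasurable aestronglyMeasurable_id
  have hμ_eq : (∫ x, x ∂μ) = ∫ p, p.2 ∂π := by
    rw [← hπ.2]
    exact integral_map (f := fun x : EuclideanSpace ℝ (Fin d) => x)
      measurable_snd.aemeasurable aestronglyMeasurable_id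
  rw [hν_eq, hμ_eq, ← integral_sub h1 h2]
  calc ‖∫ p, (p.1 - p.2) ∂π‖ ≤ ∫ p, ‖p.1 - p.2‖ ∂π := norm_integral_le_integral_norm _
    _ ≤ ∫ p, f p / lcs ∂π := by
        refine integral_mono (h1.sub h2).norm (hf_int.div_const lcs) fun p => ?_
        rw [le_div_iff₀ hlcs, mul_comm]
        exact hcl _
    _ = (∫ p, f p ∂π) / lcs := integral_div lcs f
    _ ≤ Real.sqrt (∫ p, f p ^ 2 ∂π) / lcs := by
        gcongr
        exact jensen_sqrt π f (fun p => hc0 _) hm hint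

lemma geom_tail_bound {s : ℝ} (hs0 : 0 < s) (hs1 : s < 1) (k₀ k : ℕ) :
    ∑ t ∈ Finset.Ico k₀ k, (Real.sqrt (1 - s)) ^ t ≤ (2 / s) * Real.exp (-(s * k₀) / 2) := by
  set q := Real.sqrt (1 - s) with hq
  have hq0 : 0 ≤ q := Real.sqrt_nonneg _
  have hq2 : q ^ 2 = 1 - s := Real.sq_sqrt (by linarith)
  have hq1 : q < 1 := by nlinarith
  have hsum_eq : ∑ t ∈ Finset.Ico k₀ k, q ^ t
      = q ^ k₀ * ∑ i ∈ Finset.range (k - k₀), q ^ i := by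
    rw [Finset.sum_Ico_eq_sum_range, Finset.mul_sum]
    exact Finset.sum_congr rfl fun i _ => by rw [pow_add]
  rw [hsum_eq]
  have hgeom : ∑ i ∈ Finset.range (k - k₀), q ^ i ≤ 2 / s := by
    have hid : (1 - q) * ∑ i ∈ Finset.range (k - k₀), q ^ i = 1 - q ^ (k - k₀) := by
      linear_combination -geom_sum_mul q (k - k₀)
    have hqn : (0:ℝ) ≤ q ^ (k - k₀) := pow_nonneg hq0 _
    have hsnn : (0:ℝ) ≤ ∑ i ∈ Finset.range (k - k₀), q ^ i :=
      Finset.sum_nonneg fun i _ => pow_nonneg hq0 _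
    rw [le_div_iff₀ hs0]
    nlinarith
  have hqexp : q ≤ Real.exp (-s / 2) := by
    have h1 : 1 - s ≤ Real.exp (-s) := by
      have := Real.add_one_le_exp (-s); linarith
    calc q ≤ Real.sqrt (Real.exp (-s)) := Real.sqrt_le_sqrt h1
      _ = Real.exp (-s / 2) := (Real.exp_half (-s)).symm
  have hpow : q ^ k₀ ≤ Real.exp (-(s * k₀) / 2) := by
    calc q ^ k₀ ≤ (Real.exp (-s / 2)) ^ k₀ := pow_le_pow_left₀ hq0 hqexp k₀
      _ = Real.exp ((k₀ : ℝ) * (-s / 2)) := (Real.exp_nat_mul _ k₀).symm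
      _ = Real.exp (-(s * k₀) / 2) := by ring_nf
  refine le_trans (mul_le_mul hpow hgeom
    (Finset.sum_nonneg fun i _ => pow_nonneg hq0 _) (Real.exp_nonneg _))
    (le_of_eq (mul_comm _ _))

set_option maxHeartbeats 1000000 in
/-- Richardson–Romberg extrapolation of two tail averages for the two stepsizes `α` and `2α`:
the constant `C` in the error bound depends only on `C₀`, `C₁`, `lcs` and `β`. -/
theorem stmt_18 (C₀ C₁ lcs β : ℝ) (hC₀ : 0 < C₀) (hC₁ : 0 < C₁) (hlcs : 0 < lcs)
    (hβ : 0 < β) :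
    ∃ C > (0:ℝ), ∀ (d : ℕ) (Ω : Type) [MeasurableSpace Ω]
      (Pr : Measure Ω) [IsProbabilityMeasure Pr] (α : ℝ), 0 < α → 2 * α * C₁ < 1 →
      ∀ θa θb : ℕ → Ω → EuclideanSpace ℝ (Fin d),
      (∀ t, Measurable (θa t)) → (∀ t, Integrable (θa t) Pr) →
      (∀ t, Measurable (θb t)) → (∀ t, Integrable (θb t) Pr) →
      ∀ c : EuclideanSpace ℝ (Fin d) → ℝ, IsNormLike c → (∀ x, lcs * ‖x‖ ≤ c x) →
      ∀ τ : ℕ, 1 ≤ τ →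
      ∀ (μa μb : Measure (EuclideanSpace ℝ (Fin d))),
        IsProbabilityMeasure μa → IsProbabilityMeasure μb →
        Integrable (fun x : EuclideanSpace ℝ (Fin d) => x) μa →
        Integrable (fun x : EuclideanSpace ℝ (Fin d) => x) μb →
        Integrable (fun x : EuclideanSpace ℝ (Fin d) => ‖x‖ ^ 2) μa →
        Integrable (fun x : EuclideanSpace ℝ (Fin d) => ‖x‖ ^ 2) μb →
      -- W₂² convergence of the two recursions with stepsizes α and 2α
      (∀ t ≥ τ, ∃ π : Measure (EuclideanSpace ℝ (Fin d) × EuclideanSpace ℝ (Fin d)),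
        IsCoupling π (Measure.map (θa t) Pr) μa ∧
        Integrable (fun p => (c (p.1 - p.2)) ^ 2) π ∧
        ∫ p, (c (p.1 - p.2)) ^ 2 ∂π ≤ C₀ * (1 - α * C₁) ^ t) →
      (∀ t ≥ τ, ∃ π : Measure (EuclideanSpace ℝ (Fin d) × EuclideanSpace ℝ (Fin d)),
        IsCoupling π (Measure.map (θb t) Pr) μb ∧
        Integrable (fun p => (c (p.1 - p.2)) ^ 2) π ∧
        ∫ p, (c (p.1 - p.2)) ^ 2 ∂π ≤ C₀ * (1 - 2 * α * C₁) ^ t) →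
      -- bias expansions of the two stationary means
      ∀ θstar B ra rb : EuclideanSpace ℝ (Fin d),
        (∫ x, x ∂μa) = θstar + (α ^ β) • B + ra →
        (∫ x, x ∂μb) = θstar + ((2 * α) ^ β) • B + rb →
      -- leading bias terms cancel exactly
      ((2:ℝ) ^ β / ((2:ℝ) ^ β - 1)) * α ^ β - (1 / ((2:ℝ) ^ β - 1)) * (2 * α) ^ β = 0 ∧
      ∀ k₀ ≥ τ, ∀ k ≥ k₀ + 1,
        ‖(∫ ω, ((((2:ℝ) ^ β / ((2:ℝ) ^ β - 1)) •
              (((k : ℝ) - (k₀ : ℝ))⁻¹ • ∑ t ∈ Finset.Ico k₀ k, θa t ω))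
            - ((1 / ((2:ℝ) ^ β - 1)) •
              (((k : ℝ) - (k₀ : ℝ))⁻¹ • ∑ t ∈ Finset.Ico k₀ k, θb t ω))) ∂Pr) - θstar‖ ≤
          ((2:ℝ) ^ β * ‖ra‖ + ‖rb‖) / ((2:ℝ) ^ β - 1)
            + (C / (α * ((k : ℝ) - (k₀ : ℝ)))) * Real.exp (-(α * C₁ * (k₀ : ℝ)) / 2) := by
  have h2β : 1 < (2:ℝ) ^ β := by
    rw [Real.one_lt_rpow_iff_of_pos (by norm_num)]
    left; exact ⟨one_lt_two, hβ⟩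
  have hDpos : 0 < (2:ℝ) ^ β - 1 := by linarith
  have hDne : ((2:ℝ) ^ β - 1) ≠ 0 := ne_of_gt hDpos
  have h2βpos : (0:ℝ) < (2:ℝ) ^ β := by linarith
  refine ⟨(2 * (2:ℝ) ^ β + 1) / ((2:ℝ) ^ β - 1) * (Real.sqrt C₀ / (lcs * C₁)),
    mul_pos (div_pos (by positivity) hDpos)
      (div_pos (Real.sqrt_pos.2 hC₀) (mul_pos hlcs hC₁)), ?_⟩
  intro d Ω _ Pr _ α hα hαC θa θb hma hia hmb hib c hc hcl τ hτ μa μb hPa hPb hInta hIntb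
    _ _ hWa hWb θstar B ra rb hmaE hmbE
  haveI := hPa; haveI := hPb
  have hαC1 : 0 < α * C₁ := mul_pos hα hC₁
  have hαC1' : α * C₁ < 1 := by nlinarith
  have h2αC1 : 0 < 2 * α * C₁ := by linarith
  have h2αC1' : 2 * α * C₁ < 1 := hαC
  have h2αβ : ((2:ℝ) * α) ^ β = (2:ℝ) ^ β * α ^ β := Real.mul_rpow (by norm_num) hα.le
  have hcancel : ((2:ℝ) ^ β / ((2:ℝ) ^ β - 1)) * α ^ β
      - (1 / ((2:ℝ) ^ β - 1)) * (2 * α) ^ β = 0 := by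
    rw [h2αβ]; field_simp; ring
  refine ⟨hcancel, ?_⟩
  intro k₀ hk₀ k hk
  set c₁ : ℝ := (2:ℝ) ^ β / ((2:ℝ) ^ β - 1) with hc₁
  set c₂ : ℝ := 1 / ((2:ℝ) ^ β - 1) with hc₂
  have hc₁pos : 0 < c₁ := div_pos h2βpos hDpos
  have hc₂pos : 0 < c₂ := div_pos one_pos hDpos
  set N : ℝ := (k:ℝ) - (k₀:ℝ) with hN
  have hk₀k : k₀ < k := by omega
  have hNpos : 0 < N := by
    rw [hN, sub_pos]
    exact_mod_cast hk₀k
  have hNne : N ≠ 0 := ne_of_gt hNpos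
  have hcard : ((Finset.Ico k₀ k).card : ℝ) = N := by
    rw [Nat.card_Ico, hN, Nat.cast_sub hk₀k.le]
  set ma : EuclideanSpace ℝ (Fin d) := ∫ x, x ∂μa with hma'
  set mb : EuclideanSpace ℝ (Fin d) := ∫ x, x ∂μb with hmb'
  set Exp : ℝ := Real.exp (-(α * C₁ * (k₀:ℝ)) / 2) with hExp
  have hExppos : 0 < Exp := Real.exp_pos _
  -- per-time bounds
  have keyA : ∀ t ∈ Finset.Ico k₀ k,
      ‖(∫ ω, θa t ω ∂Pr) - ma‖ ≤ (Real.sqrt C₀ / lcs) * (Real.sqrt (1 - α * C₁)) ^ t := by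
    intro t ht
    have htτ : τ ≤ t := le_trans hk₀ (Finset.mem_Ico.mp ht).1
    obtain ⟨π, hπ, hπint, hπle⟩ := hWa t htτ
    haveI : IsProbabilityMeasure (Measure.map (θa t) Pr) :=
      Measure.isProbabilityMeasure_map (hma t).aemeasurable
    have hνint : Integrable (fun x : EuclideanSpace ℝ (Fin d) => x) (Measure.map (θa t) Pr) := by
      rw [integrable_map_measure (g := fun x : EuclideanSpace ℝ (Fin d) => x)
        aestronglyMeasurable_id (hma t).aemeasurable]
      exact hia t
    have heq : (∫ ω, θa t ω ∂Pr) = ∫ x, x ∂(Measure.map (θa t) Pr) :=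
      (integral_map (f := fun x : EuclideanSpace ℝ (Fin d) => x)
        (hma t).aemeasurable aestronglyMeasurable_id).symm
    rw [heq]
    refine le_trans (coupling_mean_dist hlcs c hcl _ μa hνint hInta π hπ hπint) ?_
    have hρ : (0:ℝ) ≤ 1 - α * C₁ := by linarith
    have h1 : Real.sqrt (∫ p, (c (p.1 - p.2)) ^ 2 ∂π) ≤ Real.sqrt (C₀ * (1 - α * C₁) ^ t) :=
      Real.sqrt_le_sqrt hπle
    have h2 : Real.sqrt (C₀ * (1 - α * C₁) ^ t)
        = Real.sqrt C₀ * (Real.sqrt (1 - α * C₁)) ^ t := by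
      rw [Real.sqrt_mul hC₀.le, sqrt_pow_aux _ hρ]
    calc Real.sqrt (∫ p, (c (p.1 - p.2)) ^ 2 ∂π) / lcs
        ≤ Real.sqrt (C₀ * (1 - α * C₁) ^ t) / lcs := by gcongr
      _ = Real.sqrt C₀ / lcs * (Real.sqrt (1 - α * C₁)) ^ t := by rw [h2]; ring
  have keyB : ∀ t ∈ Finset.Ico k₀ k,
      ‖(∫ ω, θb t ω ∂Pr) - mb‖ ≤ (Real.sqrt C₀ / lcs) * (Real.sqrt (1 - 2 * α * C₁)) ^ t := by
    intro t ht
    have htτ : τ ≤ t := le_trans hk₀ (Finset.mem_Ico.mp ht).1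
    obtain ⟨π, hπ, hπint, hπle⟩ := hWb t htτ
    haveI : IsProbabilityMeasure (Measure.map (θb t) Pr) :=
      Measure.isProbabilityMeasure_map (hmb t).aemeasurable
    have hνint : Integrable (fun x : EuclideanSpace ℝ (Fin d) => x) (Measure.map (θb t) Pr) := by
      rw [integrable_map_measure (g := fun x : EuclideanSpace ℝ (Fin d) => x)
        aestronglyMeasurable_id (hmb t).aemeasurable]
      exact hib t
    have heq : (∫ ω, θb t ω ∂Pr) = ∫ x, x ∂(Measure.map (θb t) Pr) :=
      (integral_map (f := fun x : EuclideanSpace ℝ (Fin d) => x)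
        (hmb t).aemeasurable aestronglyMeasurable_id).symm
    rw [heq]
    refine le_trans (coupling_mean_dist hlcs c hcl _ μb hνint hIntb π hπ hπint) ?_
    have hρ : (0:ℝ) ≤ 1 - 2 * α * C₁ := by linarith
    have h2 : Real.sqrt (C₀ * (1 - 2 * α * C₁) ^ t)
        = Real.sqrt C₀ * (Real.sqrt (1 - 2 * α * C₁)) ^ t := by
      rw [Real.sqrt_mul hC₀.le, sqrt_pow_aux _ hρ]
    calc Real.sqrt (∫ p, (c (p.1 - p.2)) ^ 2 ∂π) / lcs
        ≤ Real.sqrt (C₀ * (1 - 2 * α * C₁) ^ t) / lcs := by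
          gcongr
      _ = Real.sqrt C₀ / lcs * (Real.sqrt (1 - 2 * α * C₁)) ^ t := by rw [h2]; ring
  -- sums of expectations
  set SA : EuclideanSpace ℝ (Fin d) := ∑ t ∈ Finset.Ico k₀ k, ∫ ω, θa t ω ∂Pr with hSA
  set SB : EuclideanSpace ℝ (Fin d) := ∑ t ∈ Finset.Ico k₀ k, ∫ ω, θb t ω ∂Pr with hSB
  have hsub : ∀ (m : EuclideanSpace ℝ (Fin d)) (S : EuclideanSpace ℝ (Fin d))
      (f : ℕ → EuclideanSpace ℝ (Fin d)), S = ∑ t ∈ Finset.Ico k₀ k, f t →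
      N⁻¹ • S - m = N⁻¹ • ∑ t ∈ Finset.Ico k₀ k, (f t - m) := by
    intro m S f hS
    rw [hS, Finset.sum_sub_distrib, smul_sub, Finset.sum_const, ← Nat.cast_smul_eq_nsmul ℝ,
      hcard, smul_smul, inv_mul_cancel₀ hNne, one_smul]
  have boundA : ‖N⁻¹ • SA - ma‖
      ≤ N⁻¹ * ((Real.sqrt C₀ / lcs) * ((2 / (α * C₁)) * Exp)) := by
    rw [hsub ma SA _ hSA, norm_smul, Real.norm_eq_abs, abs_of_pos (inv_pos.2 hNpos)]
    have h1 : ‖∑ t ∈ Finset.Ico k₀ k, ((∫ ω, θa t ω ∂Pr) - ma)‖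
        ≤ ∑ t ∈ Finset.Ico k₀ k, (Real.sqrt C₀ / lcs) * (Real.sqrt (1 - α * C₁)) ^ t :=
      norm_sum_le_of_le _ keyA
    have h2 : ∑ t ∈ Finset.Ico k₀ k, (Real.sqrt C₀ / lcs) * (Real.sqrt (1 - α * C₁)) ^ t
        ≤ (Real.sqrt C₀ / lcs) * ((2 / (α * C₁)) * Exp) := by
      rw [← Finset.mul_sum, hExp]
      exact mul_le_mul_of_nonneg_left (geom_tail_bound hαC1 hαC1' k₀ k) (by positivity)
    exact mul_le_mul_of_nonneg_left (le_trans h1 h2) (inv_pos.2 hNpos).le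
  have boundB : ‖N⁻¹ • SB - mb‖
      ≤ N⁻¹ * ((Real.sqrt C₀ / lcs) * ((1 / (α * C₁)) * Exp)) := by
    rw [hsub mb SB _ hSB, norm_smul, Real.norm_eq_abs, abs_of_pos (inv_pos.2 hNpos)]
    have h1 : ‖∑ t ∈ Finset.Ico k₀ k, ((∫ ω, θb t ω ∂Pr) - mb)‖
        ≤ ∑ t ∈ Finset.Ico k₀ k, (Real.sqrt C₀ / lcs) * (Real.sqrt (1 - 2 * α * C₁)) ^ t :=
      norm_sum_le_of_le _ keyB
    have h2 : ∑ t ∈ Finset.Ico k₀ k, (Real.sqrt C₀ / lcs) * (Real.sqrt (1 - 2 * α * C₁)) ^ t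
        ≤ (Real.sqrt C₀ / lcs) * ((1 / (α * C₁)) * Exp) := by
      rw [← Finset.mul_sum, hExp]
      refine mul_le_mul_of_nonneg_left
        (le_trans (geom_tail_bound h2αC1 h2αC1' k₀ k) ?_) (by positivity)
      have he1 : (2:ℝ) / (2 * α * C₁) = 1 / (α * C₁) := by field_simp
      rw [he1]
      refine mul_le_mul_of_nonneg_left (Real.exp_le_exp.2 ?_) (by positivity)
      nlinarith [mul_nonneg (mul_nonneg hα.le hC₁.le) (Nat.cast_nonneg k₀)]
    exact mul_le_mul_of_nonneg_left (le_trans h1 h2) (inv_pos.2 hNpos).le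
  -- compute the expectation
  have hIa : Integrable (fun ω => ∑ t ∈ Finset.Ico k₀ k, θa t ω) Pr :=
    integrable_finset_sum _ fun t _ => hia t
  have hIb : Integrable (fun ω => ∑ t ∈ Finset.Ico k₀ k, θb t ω) Pr :=
    integrable_finset_sum _ fun t _ => hib t
  have hEint : (∫ ω, ((c₁ • (N⁻¹ • ∑ t ∈ Finset.Ico k₀ k, θa t ω))
        - (c₂ • (N⁻¹ • ∑ t ∈ Finset.Ico k₀ k, θb t ω))) ∂Pr)
      = c₁ • (N⁻¹ • SA) - c₂ • (N⁻¹ • SB) := by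
    have hI1 : Integrable (fun ω => c₁ • (N⁻¹ • ∑ t ∈ Finset.Ico k₀ k, θa t ω)) Pr := by
      exact (hIa.smul (N⁻¹ : ℝ)).smul c₁
    have hI2 : Integrable (fun ω => c₂ • (N⁻¹ • ∑ t ∈ Finset.Ico k₀ k, θb t ω)) Pr := by
      exact (hIb.smul (N⁻¹ : ℝ)).smul c₂
    rw [integral_sub hI1 hI2, integral_smul, integral_smul, integral_smul, integral_smul,
      integral_finset_sum _ fun t _ => hia t, integral_finset_sum _ fun t _ => hib t,
      hSA, hSB]
  rw [hEint]
  -- key algebraic identity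
  have hid : c₁ • (N⁻¹ • SA) - c₂ • (N⁻¹ • SB) - θstar
      = (c₁ • (N⁻¹ • SA - ma) - c₂ • (N⁻¹ • SB - mb)) + (c₁ • ra - c₂ • rb) := by
    have hxB : c₁ • ((α ^ β) • B) - c₂ • (((2 * α) ^ β) • B) = 0 := by
      rw [smul_smul, smul_smul, ← sub_smul, hcancel, zero_smul]
    have hxθ : c₁ • θstar - c₂ • θstar = θstar := by
      rw [← sub_smul, hc₁, hc₂, div_sub_div_same, div_self hDne, one_smul]
    have expand : (c₁ • (N⁻¹ • SA - (θstar + α ^ β • B + ra))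
          - c₂ • (N⁻¹ • SB - (θstar + (2 * α) ^ β • B + rb))) + (c₁ • ra - c₂ • rb)
        = c₁ • (N⁻¹ • SA) - c₂ • (N⁻¹ • SB) - (c₁ • θstar - c₂ • θstar)
          - (c₁ • (α ^ β • B) - c₂ • ((2 * α) ^ β • B)) := by
      simp only [smul_sub, smul_add]
      abel
    rw [hmaE, hmbE, expand, hxθ, hxB, sub_zero]
  rw [hid]
  have hnorm : ‖(c₁ • (N⁻¹ • SA - ma) - c₂ • (N⁻¹ • SB - mb)) + (c₁ • ra - c₂ • rb)‖
      ≤ c₁ * ‖N⁻¹ • SA - ma‖ + c₂ * ‖N⁻¹ • SB - mb‖ + (c₁ * ‖ra‖ + c₂ * ‖rb‖) := by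
    have e1 : ‖c₁ • (N⁻¹ • SA - ma) - c₂ • (N⁻¹ • SB - mb)‖
        ≤ c₁ * ‖N⁻¹ • SA - ma‖ + c₂ * ‖N⁻¹ • SB - mb‖ := by
      refine le_trans (norm_sub_le _ _) (le_of_eq ?_)
      rw [norm_smul, norm_smul, Real.norm_eq_abs, Real.norm_eq_abs,
        abs_of_pos hc₁pos, abs_of_pos hc₂pos]
    have e2 : ‖c₁ • ra - c₂ • rb‖ ≤ c₁ * ‖ra‖ + c₂ * ‖rb‖ := by
      refine le_trans (norm_sub_le _ _) (le_of_eq ?_)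
      rw [norm_smul, norm_smul, Real.norm_eq_abs, Real.norm_eq_abs,
        abs_of_pos hc₁pos, abs_of_pos hc₂pos]
    exact le_trans (norm_add_le _ _) (by linarith)
  refine le_trans hnorm ?_
  have hfinal1 : c₁ * ‖ra‖ + c₂ * ‖rb‖ = ((2:ℝ) ^ β * ‖ra‖ + ‖rb‖) / ((2:ℝ) ^ β - 1) := by
    rw [hc₁, hc₂]; field_simp; try ring
  have hfinal2 : c₁ * (N⁻¹ * ((Real.sqrt C₀ / lcs) * ((2 / (α * C₁)) * Exp)))
      + c₂ * (N⁻¹ * ((Real.sqrt C₀ / lcs) * ((1 / (α * C₁)) * Exp)))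
      = ((2 * (2:ℝ) ^ β + 1) / ((2:ℝ) ^ β - 1) * (Real.sqrt C₀ / (lcs * C₁))) / (α * N) * Exp := by
    rw [hc₁, hc₂]
    field_simp
    try ring
  have h3 : c₁ * ‖N⁻¹ • SA - ma‖ + c₂ * ‖N⁻¹ • SB - mb‖
      ≤ ((2 * (2:ℝ) ^ β + 1) / ((2:ℝ) ^ β - 1) * (Real.sqrt C₀ / (lcs * C₁))) / (α * N) * Exp := by
    rw [← hfinal2]
    gcongr
  linarith [h3, le_of_eq hfinal1]
end
end
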